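/- arXiv:2604.04740 — 9 statements merged into one kernel-verified Lean document; each statement's English description precedes it below -/
import Mathlib

section
/- Let J be a finite set of items with integer widths w_j ≥ 1 and integer heights h_j ≥ 1, and let I be a finite set of strips with integer widths W_i ≥ 1 and per-unit-area costs C_i > 0, such that every item fits on at least one strip (w_j ≤ max_i W_i). Then the infimum of Σ_i C_i·W_i·H_i over all fractional solutions is at most the cost Σ_i C_i·W_i·H_i of every feasible GMSPP packing. In other words, the LP relaxation of the column-load model (P|cont|C_max) provides a valid lower bound z*_{LP-PC} ≤ z* on the optimal GMSPP value. -/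
open scoped Classical

/-- A feasible GMSPP packing of the finite set `J` of items into the strips
`I` with strip heights `Hs i ≥ 0`: an assignment `σ` and coordinates
`x j, y j ≥ 0` with `x j + w j ≤ Wd (σ j)` and `y j + h j ≤ Hs (σ j)`, such
that the open rectangles of distinct items on a common strip are disjoint. -/
def IsGMSPPPacking {ι κ : Type*} (J : Finset ι) (I : Finset κ)
    (w h : ι → ℝ) (Wd Hs : κ → ℝ) (σ : ι → κ) (x y : ι → ℝ) : Prop :=
  (∀ i ∈ I, 0 ≤ Hs i) ∧
  (∀ j ∈ J, σ j ∈ I) ∧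
  (∀ j ∈ J, 0 ≤ x j ∧ 0 ≤ y j ∧
    x j + w j ≤ Wd (σ j) ∧ y j + h j ≤ Hs (σ j)) ∧
  (∀ j ∈ J, ∀ k ∈ J, j ≠ k → σ j = σ k →
    Disjoint (Set.Ioo (x j) (x j + w j) ×ˢ Set.Ioo (y j) (y j + h j))
             (Set.Ioo (x k) (x k + w k) ×ˢ Set.Ioo (y k) (y k + h k)))

/-- The set of *normal positions* (as natural numbers) of item `j` on a strip
of width `Wi`, for items `J` with integer widths `w`: positions
`p = ∑_{k ∈ S} w k` for some `S ⊆ J \ {j}` with `p + w j ≤ Wi`. -/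
def NormalPosNat {ι : Type*} [DecidableEq ι] (J : Finset ι) (w : ι → ℕ)
    (Wi : ℕ) (j : ι) : Set ℕ :=
  { p | (∃ S ⊆ J.erase j, p = ∑ k ∈ S, w k) ∧ p + w j ≤ Wi }

/-- A *fractional solution* of the column-load model (P|cont|C_max):
strip heights `Hs i ≥ 0` and values `xv i j p ∈ [0,1]`, supported on feasible
strips and normal positions, satisfying the assignment constraints and the
column-load constraints. -/
def IsFractionalSolution {ι κ : Type*} [DecidableEq ι]
    (J : Finset ι) (I : Finset κ) (w h : ι → ℕ) (Wd : κ → ℕ)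
    (Hs : κ → ℝ) (xv : κ → ι → ℕ → ℝ) : Prop :=
  (∀ i ∈ I, 0 ≤ Hs i) ∧
  (∀ i ∈ I, ∀ j ∈ J, ∀ p : ℕ, 0 ≤ xv i j p ∧ xv i j p ≤ 1) ∧
  (∀ i ∈ I, ∀ j ∈ J, ∀ p : ℕ, xv i j p ≠ 0 →
    w j ≤ Wd i ∧ p ∈ NormalPosNat J w (Wd i) j) ∧
  (∀ j ∈ J, ∑ i ∈ I, ∑ p ∈ Finset.range (Wd i), xv i j p = 1) ∧
  (∀ i ∈ I, ∀ q < Wd i,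
    ∑ j ∈ J, ∑ p ∈ (Finset.range (Wd i)).filter
        (fun p => p ∈ NormalPosNat J w (Wd i) j ∧ p ≤ q ∧ q < p + w j),
      (h j : ℝ) * xv i j p ≤ Hs i)

/-!
A packing yields an integral solution of the column-load model with the same strip heights,
hence the same cost. Move each item `j` to `leftShift`, the largest subset sum of the widths of
the items lying strictly left of `j` that does not exceed `x j`; this is a normal position at
most `x j`. If `k` ends where `j` starts or further left, then `k`'s shifted position plus `w k`
is a subset sum available to `j`, so on each strip the left-to-right order of items with
overlapping vertical extents survives the shift. Hence the items covering column `q` of strip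
`i` have pairwise disjoint vertical extents in `[0, H_i]`, and their heights sum to at most `H_i`.
-/

open Set MeasureTheory

theorem le_or_le_of_disjoint_Ioo {a b c d : ℝ} (hab : a < b) (hcd : c < d)
    (h : Disjoint (Ioo a b) (Ioo c d)) : b ≤ c ∨ d ≤ a := by
  rw [Ioo_disjoint_Ioo, min_le_iff, le_max_iff, le_max_iff] at h
  rcases h with (h | h) | (h | h)
  · linarith
  · exact .inl h
  · exact .inr h
  · linarith

theorem sum_le_of_pairwiseDisjoint_Ioo {ι : Type*} {T : Finset ι} {a ℓ : ι → ℝ} {H : ℝ}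
    (hH : 0 ≤ H) (hℓ : ∀ j ∈ T, 0 ≤ ℓ j) (ha : ∀ j ∈ T, 0 ≤ a j)
    (haH : ∀ j ∈ T, a j + ℓ j ≤ H)
    (hd : (T : Set ι).PairwiseDisjoint fun j => Ioo (a j) (a j + ℓ j)) :
    ∑ j ∈ T, ℓ j ≤ H := by
  rw [← ENNReal.ofReal_le_ofReal_iff hH]
  calc ENNReal.ofReal (∑ j ∈ T, ℓ j)
      = ∑ j ∈ T, volume (Ioo (a j) (a j + ℓ j)) := by
        rw [ENNReal.ofReal_sum_of_nonneg hℓ]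
        simp [Real.volume_Ioo]
    _ = volume (⋃ j ∈ T, Ioo (a j) (a j + ℓ j)) :=
        (measure_biUnion_finset hd fun _ _ => measurableSet_Ioo).symm
    _ ≤ volume (Icc 0 H) := by
        refine measure_mono (iUnion₂_subset fun j hj t ht => ?_)
        exact ⟨(ha j hj).trans ht.1.le, ht.2.le.trans (haH j hj)⟩
    _ = ENNReal.ofReal H := by rw [Real.volume_Icc, sub_zero]

section LeftShift

variable {ι : Type*} (J : Finset ι) (w : ι → ℕ) (x : ι → ℝ)

noncomputable def leftShift (j : ι) : ℕ :=
  ({k ∈ J | x k < x j}.powerset.filter fun S => (∑ k ∈ S, w k : ℝ) ≤ x j).sup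
    fun S => ∑ k ∈ S, w k

variable {J w x}

theorem sum_le_leftShift {j : ι} {S : Finset ι} (hSJ : S ⊆ J) (hS : ∀ k ∈ S, x k < x j)
    (hSx : (∑ k ∈ S, w k : ℝ) ≤ x j) : ∑ k ∈ S, w k ≤ leftShift J w x j :=
  Finset.le_sup (f := fun S => ∑ k ∈ S, w k)
    (Finset.mem_filter.2 ⟨Finset.mem_powerset.2 fun k hk => Finset.mem_filter.2 ⟨hSJ hk, hS k hk⟩,
      hSx⟩)

theorem exists_sum_eq_leftShift {j : ι} (hj : 0 ≤ x j) :
    ∃ S ⊆ J, (∀ k ∈ S, x k < x j) ∧ (∑ k ∈ S, w k : ℝ) ≤ x j ∧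
      leftShift J w x j = ∑ k ∈ S, w k := by
  obtain ⟨S, hS, hsup⟩ := Finset.exists_mem_eq_sup
    ({k ∈ J | x k < x j}.powerset.filter fun S => (∑ k ∈ S, w k : ℝ) ≤ x j)
    ⟨∅, by simpa using hj⟩ fun S => ∑ k ∈ S, w k
  obtain ⟨hSJ, hSx⟩ := Finset.mem_filter.1 hS
  have hSJ := Finset.mem_powerset.1 hSJ
  exact ⟨S, fun k hk => (Finset.mem_filter.1 (hSJ hk)).1,
    fun k hk => (Finset.mem_filter.1 (hSJ hk)).2, hSx, hsup⟩

theorem leftShift_le {j : ι} (hj : 0 ≤ x j) : (leftShift J w x j : ℝ) ≤ x j := by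
  obtain ⟨S, -, -, hSx, hS⟩ := exists_sum_eq_leftShift (w := w) (J := J) hj
  rw [hS]
  exact_mod_cast hSx

theorem exists_subset_erase_eq_leftShift [DecidableEq ι] (j : ι) :
    ∃ S ⊆ J.erase j, leftShift J w x j = ∑ k ∈ S, w k := by
  refine Finset.sup_induction (p := fun a => ∃ S ⊆ J.erase j, a = ∑ k ∈ S, w k)
    ⟨∅, Finset.empty_subset _, rfl⟩ (fun a ha b hb => ?_) fun S hS => ⟨S, fun k hk => ?_, rfl⟩
  · rcases le_total a b with hab | hab
    · rwa [sup_of_le_right hab]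
    · rwa [sup_of_le_left hab]
  · have hk := Finset.mem_filter.1 (Finset.mem_powerset.1 (Finset.mem_filter.1 hS).1 hk)
    exact Finset.mem_erase.2 ⟨fun hkj => (hkj ▸ hk.2 : x j < x j).false, hk.1⟩

theorem leftShift_add_le [DecidableEq ι] {j k : ι} (hkJ : k ∈ J) (hk : 0 ≤ x k) (hwk : 0 < w k)
    (hkj : x k + w k ≤ x j) : leftShift J w x k + w k ≤ leftShift J w x j := by
  have hxkj : x k < x j := by
    have : (0 : ℝ) < w k := by exact_mod_cast hwk
    linarith
  obtain ⟨S, hSJ, hSk, hSx, hS⟩ := exists_sum_eq_leftShift (w := w) (J := J) hk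
  have hkS : k ∉ S := fun h => (hSk k h).false
  rw [hS, add_comm, ← Finset.sum_insert hkS]
  refine sum_le_leftShift (Finset.insert_subset hkJ hSJ) ?_ ?_
  · simpa [hxkj] using fun l hl => (hSk l hl).trans hxkj
  · push_cast [Finset.sum_insert hkS]
    linarith

end LeftShift

section Placement

variable {ι κ : Type*}

noncomputable def placementSolution (σ : ι → κ) (g : ι → ℕ) : κ → ι → ℕ → ℝ :=
  fun i j p => if σ j = i ∧ g j = p then 1 else 0

theorem sum_placementSolution (σ : ι → κ) (g : ι → ℕ) (i : κ) (j : ι) (s : Finset ℕ) :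
    ∑ p ∈ s, placementSolution σ g i j p = if σ j = i ∧ g j ∈ s then 1 else 0 := by
  by_cases hσ : σ j = i <;> simp [placementSolution, hσ]

theorem isFractionalSolution_placementSolution [DecidableEq ι] {J : Finset ι} {I : Finset κ}
    {w h : ι → ℕ} {Wd : κ → ℕ} {Hs : κ → ℝ} {σ : ι → κ} {g : ι → ℕ} (hHs : ∀ i ∈ I, 0 ≤ Hs i)
    (hσ : ∀ j ∈ J, σ j ∈ I) (hw : ∀ j ∈ J, 0 < w j)
    (hg : ∀ j ∈ J, g j ∈ NormalPosNat J w (Wd (σ j)) j)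
    (hload : ∀ i ∈ I, ∀ q < Wd i,
      ∑ j ∈ J with σ j = i ∧ g j ≤ q ∧ q < g j + w j, (h j : ℝ) ≤ Hs i) :
    IsFractionalSolution J I w h Wd Hs (placementSolution σ g) := by
  have hgW : ∀ j ∈ J, g j < Wd (σ j) := fun j hj => by
    have := (hg j hj).2
    have := hw j hj
    omega
  refine ⟨hHs, fun i _ j _ p => ?_, fun i _ j hj p hp => ?_, fun j hj => ?_, fun i hi q hq => ?_⟩
  · unfold placementSolution
    split_ifs <;> norm_num
  · obtain ⟨rfl, rfl⟩ : σ j = i ∧ g j = p := by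
      by_contra hc
      exact hp (if_neg hc)
    exact ⟨by have := (hg j hj).2; omega, hg j hj⟩
  · rw [Finset.sum_eq_single_of_mem (σ j) (hσ j hj) fun i _ hi => ?_]
    · simp [sum_placementSolution, hgW j hj]
    · simp [sum_placementSolution, Ne.symm hi]
  · refine le_of_eq_of_le ?_ (hload i hi q hq)
    simp_rw [← Finset.mul_sum, sum_placementSolution, Finset.sum_filter]
    refine Finset.sum_congr rfl fun j hj => ?_
    by_cases hσj : σ j = i
    · subst hσj
      simp [hgW j hj, hg j hj]
    · simp [hσj]

end Placement

section Packing

variable {ι κ : Type*} {J : Finset ι} {I : Finset κ}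

theorem IsGMSPPPacking.le_or_le_of_not_disjoint {w h : ι → ℝ} {Wd Hs : κ → ℝ} {σ : ι → κ}
    {x y : ι → ℝ} (hP : IsGMSPPPacking J I w h Wd Hs σ x y) {j k : ι} (hj : j ∈ J) (hk : k ∈ J)
    (hjk : j ≠ k) (hσ : σ j = σ k) (hwj : 0 < w j) (hwk : 0 < w k)
    (hy : ¬ Disjoint (Ioo (y j) (y j + h j)) (Ioo (y k) (y k + h k))) :
    x j + w j ≤ x k ∨ x k + w k ≤ x j := by
  rcases Set.disjoint_prod.1 (hP.2.2.2 j hj k hk hjk hσ) with hx | hy'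
  · exact le_or_le_of_disjoint_Ioo (by linarith) (by linarith) hx
  · exact absurd hy' hy

variable [DecidableEq ι] {w h : ι → ℕ} {Wd : κ → ℕ} {Hs : κ → ℝ} {σ : ι → κ} {x y : ι → ℝ}

theorem IsGMSPPPacking.columnLoad_leftShift_le
    (hP : IsGMSPPPacking J I (fun j => (w j : ℝ)) (fun j => (h j : ℝ)) (fun i => (Wd i : ℝ))
      Hs σ x y)
    (hw : ∀ j ∈ J, 0 < w j) {i : κ} (hi : i ∈ I) (q : ℕ) :
    ∑ j ∈ J with σ j = i ∧ leftShift J w x j ≤ q ∧ q < leftShift J w x j + w j, (h j : ℝ)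
      ≤ Hs i := by
  obtain ⟨hHs, -, hxy, -⟩ := id hP
  refine sum_le_of_pairwiseDisjoint_Ioo (hHs i hi) (fun _ _ => Nat.cast_nonneg _)
    (fun j hj => (hxy j (Finset.mem_filter.1 hj).1).2.1) (fun j hj => ?_) ?_
  · obtain ⟨hjJ, rfl, -⟩ := Finset.mem_filter.1 hj
    exact (hxy j hjJ).2.2.2
  intro j hj k hk hjk
  obtain ⟨hjJ, hσj, hqj⟩ := Finset.mem_filter.1 hj
  obtain ⟨hkJ, hσk, hqk⟩ := Finset.mem_filter.1 hk
  by_contra hy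
  rcases hP.le_or_le_of_not_disjoint hjJ hkJ hjk (hσj.trans hσk.symm)
    (by exact_mod_cast hw j hjJ) (by exact_mod_cast hw k hkJ) hy with hjk | hkj
  · have := leftShift_add_le hjJ (hxy j hjJ).1 (hw j hjJ) hjk
    omega
  · have := leftShift_add_le hkJ (hxy k hkJ).1 (hw k hkJ) hkj
    omega

theorem IsGMSPPPacking.leftShift_mem_normalPosNat
    (hP : IsGMSPPPacking J I (fun j => (w j : ℝ)) (fun j => (h j : ℝ)) (fun i => (Wd i : ℝ))
      Hs σ x y) {j : ι} (hj : j ∈ J) :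
    leftShift J w x j ∈ NormalPosNat J w (Wd (σ j)) j := by
  obtain ⟨hx, -, hxW, -⟩ := hP.2.2.1 j hj
  refine ⟨exists_subset_erase_eq_leftShift j, ?_⟩
  have := leftShift_le (J := J) (w := w) hx
  exact_mod_cast (show (leftShift J w x j + w j : ℝ) ≤ Wd (σ j) by linarith)

theorem IsGMSPPPacking.isFractionalSolution_leftShift
    (hP : IsGMSPPPacking J I (fun j => (w j : ℝ)) (fun j => (h j : ℝ)) (fun i => (Wd i : ℝ))
      Hs σ x y) (hw : ∀ j ∈ J, 0 < w j) :
    IsFractionalSolution J I w h Wd Hs (placementSolution σ (leftShift J w x)) :=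
  isFractionalSolution_placementSolution hP.1 hP.2.1 hw
    (fun _ hj => hP.leftShift_mem_normalPosNat hj)
    fun _ hi q _ => hP.columnLoad_leftShift_le hw hi q

end Packing

theorem lp_pc_lower_bound_general {ι κ : Type*} [DecidableEq ι]
    (J : Finset ι) (I : Finset κ) (w h : ι → ℕ) (Wd : κ → ℕ) (Cc : κ → ℝ)
    (hw : ∀ j ∈ J, 1 ≤ w j) (hCc : ∀ i ∈ I, 0 < Cc i)
    (σ : ι → κ) (x y : ι → ℝ) (Hs : κ → ℝ)
    (hpack : IsGMSPPPacking J I (fun j => (w j : ℝ)) (fun j => (h j : ℝ))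
      (fun i => (Wd i : ℝ)) Hs σ x y) :
    sInf { z : ℝ | ∃ (Hs' : κ → ℝ) (xv : κ → ι → ℕ → ℝ),
        IsFractionalSolution J I w h Wd Hs' xv ∧
        z = ∑ i ∈ I, Cc i * (Wd i : ℝ) * Hs' i }
      ≤ ∑ i ∈ I, Cc i * (Wd i : ℝ) * Hs i := by
  refine csInf_le ⟨0, ?_⟩ ⟨Hs, _, hpack.isFractionalSolution_leftShift hw, rfl⟩
  rintro z ⟨Hs', xv, hxv, rfl⟩
  exact Finset.sum_nonneg fun i hi =>
    mul_nonneg (mul_nonneg (hCc i hi).le (Nat.cast_nonneg _)) (hxv.1 i hi)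

/-- **The LP relaxation of (P|cont|C_max) is a valid lower bound for GMSPP.**
For items with integer widths `w j ≥ 1` and heights `h j ≥ 1`, strips with
integer widths `Wd i ≥ 1` and per-unit-area costs `Cc i > 0`, such that every
item fits on at least one strip, the infimum of `∑ i, Cc i * Wd i * Hs i` over
all fractional solutions is at most the cost of every feasible GMSPP
packing. -/
theorem lp_pc_lower_bound {ι κ : Type*} [DecidableEq ι]
    (J : Finset ι) (I : Finset κ) (w h : ι → ℕ) (Wd : κ → ℕ) (Cc : κ → ℝ)
    (hw : ∀ j ∈ J, 1 ≤ w j) (hh : ∀ j ∈ J, 1 ≤ h j)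
    (hW : ∀ i ∈ I, 1 ≤ Wd i) (hCc : ∀ i ∈ I, 0 < Cc i)
    (hfit : ∀ j ∈ J, ∃ i ∈ I, w j ≤ Wd i)
    (σ : ι → κ) (x y : ι → ℝ) (Hs : κ → ℝ)
    (hpack : IsGMSPPPacking J I (fun j => (w j : ℝ)) (fun j => (h j : ℝ))
      (fun i => (Wd i : ℝ)) Hs σ x y) :
    sInf { z : ℝ | ∃ (Hs' : κ → ℝ) (xv : κ → ι → ℕ → ℝ),
        IsFractionalSolution J I w h Wd Hs' xv ∧
        z = ∑ i ∈ I, Cc i * (Wd i : ℝ) * Hs' i }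
      ≤ ∑ i ∈ I, Cc i * (Wd i : ℝ) * Hs i :=
  lp_pc_lower_bound_general J I w h Wd Cc hw hCc σ x y Hs hpack
end

section
/- Suppose a finite set J of items with integer widths w_j ≥ 1 and heights h_j > 0 admits a packing on a strip of integer width W ≥ 1 within height H. Then J admits a packing on the same strip within the same height H in which, additionally, every x-coordinate is a normal position: x_j ∈ W(j) for all j ∈ J (the Christofides–Whitlock normalization; restricting x-coordinates to normal positions does not increase the strip height). -/
/-- A packing of the finite set `J` of items (item `j` has width `w j > 0` and
height `h j > 0`) on a strip of width `W` within height `H`: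
coordinates `x j, y j ≥ 0` with `x j + w j ≤ W` and `y j + h j ≤ H`, and the
open rectangles of distinct items are disjoint. -/
def IsPacking {ι : Type*} (J : Finset ι) (w h : ι → ℝ) (W H : ℝ)
    (x y : ι → ℝ) : Prop :=
  (∀ j ∈ J, 0 ≤ x j ∧ 0 ≤ y j ∧ x j + w j ≤ W ∧ y j + h j ≤ H) ∧
  (∀ j ∈ J, ∀ k ∈ J, j ≠ k →
    Disjoint (Set.Ioo (x j) (x j + w j) ×ˢ Set.Ioo (y j) (y j + h j))
             (Set.Ioo (x k) (x k + w k) ×ˢ Set.Ioo (y k) (y k + h k)))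

/-- The set of *normal positions* of item `j` on a strip of width `Wi`, for
items `J` with integer widths `w`: positions `p = ∑_{k ∈ S} w k` for some
`S ⊆ J \ {j}` with `0 ≤ p` and `p + w j ≤ Wi`. -/
def NormalPos {ι : Type*} [DecidableEq ι] (J : Finset ι) (w : ι → ℕ) (Wi : ℕ) (j : ι) :
    Set ℝ :=
  { p | (∃ S ⊆ J.erase j, p = ∑ k ∈ S, (w k : ℝ)) ∧
        0 ≤ p ∧ p + (w j : ℝ) ≤ (Wi : ℝ) }

/-- Key auxiliary induction: given a packing and a set `P` of already
normalized items, we can normalize everything. -/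
theorem cw_aux {ι : Type*} (J : Finset ι) [DecidableEq ι] (w : ι → ℕ) (h : ι → ℝ)
    (W : ℕ) (H : ℝ)
    (hw : ∀ j ∈ J, 1 ≤ w j) (hh : ∀ j ∈ J, 0 < h j) (y : ι → ℝ) :
    ∀ n (P : Finset ι), P ⊆ J → (J \ P).card ≤ n →
    ∀ x : ι → ℝ, IsPacking J (fun j => (w j : ℝ)) h (W : ℝ) H x y →
    (∀ k ∈ P, ∃ S ⊆ P.erase k, x k = ∑ i ∈ S, (w i : ℝ)) →
    ∃ x', IsPacking J (fun j => (w j : ℝ)) h (W : ℝ) H x' y ∧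
      ∀ k ∈ J, ∃ S ⊆ J.erase k, x' k = ∑ i ∈ S, (w i : ℝ) := by
  classical
  intro n
  induction n with
  | zero =>
    intro P hPJ hcard x hpack hinv
    refine ⟨x, hpack, fun k hk => ?_⟩
    have hkP : k ∈ P := by
      by_contra hkP
      have : k ∈ J \ P := Finset.mem_sdiff.2 ⟨hk, hkP⟩
      have := Finset.card_pos.2 ⟨k, this⟩
      omega
    obtain ⟨S, hS, hsum⟩ := hinv k hkP
    exact ⟨S, hS.trans (Finset.erase_subset_erase _ hPJ), hsum⟩
  | succ n ih =>
    intro P hPJ hcard x hpack hinv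
    by_cases hne : (J \ P).Nonempty
    · -- pick the unprocessed item with minimal x
      obtain ⟨j, hjmem, hjmin⟩ := Finset.exists_min_image (J \ P) x hne
      obtain ⟨hjJ, hjP⟩ := Finset.mem_sdiff.1 hjmem
      obtain ⟨hb, hd⟩ := hpack
      -- blockers: items entirely to the left of j with overlapping y-interval
      set B : Finset ι := (J.erase j).filter
        (fun k => x k + (w k : ℝ) ≤ x j ∧ y k < y j + h j ∧ y j < y k + h k) with hB
      set T : Finset ℝ := insert (0 : ℝ) (B.image (fun k => x k + (w k : ℝ))) with hT
      have hTne : T.Nonempty := ⟨0, Finset.mem_insert_self _ _⟩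
      set p : ℝ := T.max' hTne with hp
      have hp0 : 0 ≤ p := Finset.le_max' _ _ (Finset.mem_insert_self _ _)
      have hBp : ∀ k ∈ B, x k + (w k : ℝ) ≤ p := by
        intro k hk
        exact Finset.le_max' T _ (Finset.mem_insert_of_mem (Finset.mem_image_of_mem _ hk))
      have hpxj : p ≤ x j := by
        apply Finset.max'_le
        intro a ha
        rcases Finset.mem_insert.1 ha with rfl | ha
        · exact (hb j hjJ).1
        · obtain ⟨k, hk, rfl⟩ := Finset.mem_image.1 ha
          exact (Finset.mem_filter.1 hk).2.1
      have hpmem : p = 0 ∨ ∃ k ∈ B, p = x k + (w k : ℝ) := by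
        have := Finset.max'_mem T hTne
        rcases Finset.mem_insert.1 this with h0 | hmem
        · exact Or.inl h0
        · obtain ⟨k, hk, hkeq⟩ := Finset.mem_image.1 hmem
          exact Or.inr ⟨k, hk, hkeq.symm⟩
      set x' : ι → ℝ := Function.update x j p with hx'
      have hx'j : x' j = p := Function.update_self _ _ _
      have hx'ne : ∀ k, k ≠ j → x' k = x k := fun k hk => Function.update_of_ne hk _ _
      -- the key disjointness fact for j against any other item
      have hdisj : ∀ k ∈ J, k ≠ j →
          Disjoint (Set.Ioo (x' j) (x' j + (w j : ℝ)) ×ˢ Set.Ioo (y j) (y j + h j))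
                   (Set.Ioo (x' k) (x' k + (w k : ℝ)) ×ˢ Set.Ioo (y k) (y k + h k)) := by
        intro k hkJ hkj
        rw [hx'j, hx'ne k hkj]
        rw [Set.disjoint_prod, Set.Ioo_disjoint_Ioo, Set.Ioo_disjoint_Ioo]
        by_cases hy : y k < y j + h j ∧ y j < y k + h k
        · left
          rcases le_or_gt (x k + (w k : ℝ)) (x j) with hle | hlt
          · -- k is a blocker, so it stays left of p
            have hkB : k ∈ B := by
              rw [hB, Finset.mem_filter]
              exact ⟨Finset.mem_erase.2 ⟨hkj, hkJ⟩, hle, hy.1, hy.2⟩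
            have := hBp k hkB
            calc min (p + (w j : ℝ)) (x k + (w k : ℝ)) ≤ x k + (w k : ℝ) := min_le_right _ _
              _ ≤ p := this
              _ ≤ max p (x k) := le_max_left _ _
          · -- j must be entirely to the left of k
            have hjw : (1 : ℝ) ≤ (w j : ℝ) := by exact_mod_cast hw j hjJ
            have hkw : (1 : ℝ) ≤ (w k : ℝ) := by exact_mod_cast hw k hkJ
            have hjk : x j + (w j : ℝ) ≤ x k := by
              have hthis := hd j hjJ k hkJ (fun e => hkj e.symm)
              rw [Set.disjoint_prod, Set.Ioo_disjoint_Ioo, Set.Ioo_disjoint_Ioo] at hthis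
              simp only [inf_le_iff, le_sup_iff] at hthis
              have hhj := hh j hjJ
              have hhk := hh k hkJ
              rcases hthis with (h1 | h1) | (h1 | h1) <;>
                rcases h1 with h1 | h1 <;> linarith [hy.1, hy.2]
            calc min (p + (w j : ℝ)) (x k + (w k : ℝ)) ≤ p + (w j : ℝ) := min_le_left _ _
              _ ≤ x j + (w j : ℝ) := by linarith
              _ ≤ x k := hjk
              _ ≤ max p (x k) := le_max_right _ _
        · right
          rcases not_and_or.1 hy with h1 | h1
          · push_neg at h1
            calc min (y j + h j) (y k + h k) ≤ y j + h j := min_le_left _ _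
              _ ≤ y k := h1
              _ ≤ max (y j) (y k) := le_max_right _ _
          · push_neg at h1
            calc min (y j + h j) (y k + h k) ≤ y k + h k := min_le_right _ _
              _ ≤ y j := h1
              _ ≤ max (y j) (y k) := le_max_left _ _
      -- the new packing
      have hpack' : IsPacking J (fun j => (w j : ℝ)) h (W : ℝ) H x' y := by
        constructor
        · intro i hi
          by_cases hij : i = j
          · subst hij
            rw [hx'j]
            exact ⟨hp0, (hb i hi).2.1, le_trans (by linarith) (hb i hi).2.2.1, (hb i hi).2.2.2⟩
          · rw [hx'ne i hij]; exact hb i hi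
        · intro a ha b hbJ hab
          by_cases haj : a = j
          · subst haj
            exact hdisj b hbJ (fun e => hab e.symm)
          · by_cases hbj : b = j
            · subst hbj
              exact (hdisj a ha haj).symm
            · rw [hx'ne a haj, hx'ne b hbj]
              exact hd a ha b hbJ hab
      -- the new invariant on `insert j P`
      have hinv' : ∀ k ∈ insert j P, ∃ S ⊆ (insert j P).erase k,
          x' k = ∑ i ∈ S, (w i : ℝ) := by
        intro k hk
        rcases Finset.mem_insert.1 hk with rfl | hkP
        · rw [hx'j]
          rcases hpmem with hzero | ⟨m, hmB, hpeq⟩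
          · exact ⟨∅, Finset.empty_subset _, by simp [hzero]⟩
          · obtain ⟨hmJ', hmle, _, _⟩ :=
              (by rw [hB, Finset.mem_filter] at hmB; exact ⟨hmB.1, hmB.2.1, hmB.2.2.1, hmB.2.2.2⟩ :
                m ∈ J.erase k ∧ x m + (w m : ℝ) ≤ x k ∧ _ ∧ _)
            have hmJ : m ∈ J := Finset.mem_of_mem_erase hmJ'
            have hmk : m ≠ k := (Finset.mem_erase.1 hmJ').1
            have hmw : (1 : ℝ) ≤ (w m : ℝ) := by exact_mod_cast hw m hmJ
            -- m must be already processed: x m < x k and k is minimal unprocessed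
            have hmP : m ∈ P := by
              by_contra hmP
              have := hjmin m (Finset.mem_sdiff.2 ⟨hmJ, hmP⟩)
              linarith
            obtain ⟨S, hS, hsum⟩ := hinv m hmP
            have hmS : m ∉ S := fun hmS => (Finset.mem_erase.1 (hS hmS)).1 rfl
            refine ⟨insert m S, ?_, ?_⟩
            · intro i hi
              rcases Finset.mem_insert.1 hi with rfl | hiS
              · exact Finset.mem_erase.2 ⟨hmk, Finset.mem_insert_of_mem hmP⟩
              · have hiP : i ∈ P := Finset.mem_of_mem_erase (hS hiS)
                have hik : i ≠ k := fun e => hjP (e ▸ hiP)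
                exact Finset.mem_erase.2 ⟨hik, Finset.mem_insert_of_mem hiP⟩
            · rw [Finset.sum_insert hmS, ← hsum, hpeq]; ring
        · have hkj : k ≠ j := fun e => hjP (e ▸ hkP)
          obtain ⟨S, hS, hsum⟩ := hinv k hkP
          refine ⟨S, ?_, by rw [hx'ne k hkj]; exact hsum⟩
          exact hS.trans (Finset.erase_subset_erase _ (Finset.subset_insert _ _))
      -- apply the induction hypothesis
      have hcard' : (J \ insert j P).card ≤ n := by
        rw [Finset.sdiff_insert]
        have := Finset.card_erase_of_mem hjmem
        omega
      exact ih (insert j P) (Finset.insert_subset hjJ hPJ) hcard' x' hpack' hinv'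
    · -- J ⊆ P already
      rw [Finset.not_nonempty_iff_eq_empty] at hne
      refine ⟨x, hpack, fun k hk => ?_⟩
      have hkP : k ∈ P := by
        by_contra hkP
        have : k ∈ J \ P := Finset.mem_sdiff.2 ⟨hk, hkP⟩
        simp [hne] at this
      obtain ⟨S, hS, hsum⟩ := hinv k hkP
      exact ⟨S, hS.trans (Finset.erase_subset_erase _ hPJ), hsum⟩

/-- **Christofides–Whitlock normalization.**  If a finite set `J` of items
with integer widths `w j ≥ 1` and heights `h j > 0` admits a packing on a
strip of integer width `W ≥ 1` within height `H`, then it admits a packing on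
the same strip within the same height in which every x-coordinate is a normal
position. -/
theorem christofides_whitlock_normalization {ι : Type*}
    (J : Finset ι) [DecidableEq ι] (w : ι → ℕ) (h : ι → ℝ) (W : ℕ) (H : ℝ)
    (hw : ∀ j ∈ J, 1 ≤ w j) (hh : ∀ j ∈ J, 0 < h j) (hW : 1 ≤ W)
    (x y : ι → ℝ)
    (hpack : IsPacking J (fun j => (w j : ℝ)) h (W : ℝ) H x y) :
    ∃ x' y' : ι → ℝ,
      IsPacking J (fun j => (w j : ℝ)) h (W : ℝ) H x' y' ∧
      ∀ j ∈ J, x' j ∈ NormalPos J w W j := by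
  obtain ⟨x', hpack', hnorm⟩ := cw_aux J w h W H hw hh y J.card ∅
    (Finset.empty_subset _) (by simp) x hpack (by simp)
  refine ⟨x', y, hpack', fun j hj => ?_⟩
  obtain ⟨S, hS, hsum⟩ := hnorm j hj
  obtain ⟨h1, _, h3, _⟩ := hpack'.1 j hj
  exact ⟨⟨S, hS, hsum⟩, h1, h3⟩
end

section
/- Let J be a finite set of items with integer widths w_j ≥ 1 and heights h_j > 0, and let strips i ∈ I have integer widths W_i ≥ 1. For every feasible GMSPP packing (σ, x, y) with strip heights H_i, there exists a feasible GMSPP packing with the same assignment σ and the same strip heights H_i in which every x-coordinate is a normal position on its strip: x_j ∈ W_{σ(j)}(j) for all j. Consequently, restricting x-coordinates to normal positions loses no optimality: the infimum cost Σ_i C_i·W_i·H_i over normal-position packings equals the infimum over all feasible GMSPP packings. -/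
section GMSPPAux

variable {ι κ : Type*} [DecidableEq ι]

private lemma prodDisjLeft {α β : Type*} {a c : Set α} {b d : Set β}
    (hac : Disjoint a c) : Disjoint (a ×ˢ b) (c ×ˢ d) :=
  Set.disjoint_left.mpr fun z hz hz' => Set.disjoint_left.mp hac hz.1 hz'.1

private lemma prodDisjRight {α β : Type*} {a c : Set α} {b d : Set β}
    (hbd : Disjoint b d) : Disjoint (a ×ˢ b) (c ×ˢ d) :=
  Set.disjoint_left.mpr fun z hz hz' => Set.disjoint_left.mp hbd hz.2 hz'.2

private lemma iooDisj {a b c d : ℝ} (hbc : b ≤ c) :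
    Disjoint (Set.Ioo a b) (Set.Ioo c d) :=
  Set.disjoint_left.mpr fun z hz hz' => absurd (lt_of_lt_of_le hz.2 hbc) (not_lt.mpr hz'.1.le)

lemma gmspp_key (w : ι → ℕ) (h : ι → ℝ) (σ : ι → κ) (y x : ι → ℝ) :
    ∀ J : Finset ι,
    (∀ j ∈ J, 1 ≤ w j) →
    (∀ j ∈ J, 0 ≤ x j) →
    (∀ j ∈ J, ∀ k ∈ J, j ≠ k → σ j = σ k →
      Disjoint (Set.Ioo (x j) (x j + (w j : ℝ)) ×ˢ Set.Ioo (y j) (y j + h j))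
               (Set.Ioo (x k) (x k + (w k : ℝ)) ×ˢ Set.Ioo (y k) (y k + h k))) →
    ∃ x' : ι → ℝ,
      (∀ j ∈ J, 0 ≤ x' j ∧ x' j ≤ x j) ∧
      (∀ j ∈ J, ∃ S ⊆ J.erase j, x' j = ∑ k ∈ S, (w k : ℝ)) ∧
      (∀ j ∈ J, ∀ k ∈ J, j ≠ k → σ j = σ k →
        Disjoint (Set.Ioo (x' j) (x' j + (w j : ℝ)) ×ˢ Set.Ioo (y j) (y j + h j))
                 (Set.Ioo (x' k) (x' k + (w k : ℝ)) ×ˢ Set.Ioo (y k) (y k + h k))) := by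
  classical
  intro J
  induction J using Finset.strongInduction with
  | _ J IH =>
  intro hw hx hdis
  rcases J.eq_empty_or_nonempty with rfl | hne
  · exact ⟨x, fun j hj => absurd hj (Finset.notMem_empty j),
      fun j hj => absurd hj (Finset.notMem_empty j),
      fun j hj => absurd hj (Finset.notMem_empty j)⟩
  obtain ⟨j0, hj0, hmax⟩ := J.exists_max_image x hne
  have hj0w : (1 : ℕ) ≤ w j0 := hw j0 hj0
  set J' := J.erase j0 with hJ'def
  have hsub : J' ⊆ J := J.erase_subset j0
  obtain ⟨x', hle, hns, hd⟩ := IH J' (J.erase_ssubset hj0)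
    (fun j hj => hw j (hsub hj)) (fun j hj => hx j (hsub hj))
    (fun j hj k hk => hdis j (hsub hj) k (hsub hk))
  have keyA : ∀ k ∈ J', σ k = σ j0 →
      ((Set.Ioo (y j0) (y j0 + h j0)) ∩ (Set.Ioo (y k) (y k + h k))).Nonempty →
      x k + (w k : ℝ) ≤ x j0 := by
    intro k hk hσ hov
    obtain ⟨v, hv1, hv2⟩ := hov
    by_contra hlt
    push_neg at hlt
    have hkJ := hsub hk
    have hkne : j0 ≠ k := (Finset.ne_of_mem_erase hk).symm
    have hxk : x k ≤ x j0 := hmax k hkJ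
    have hw0 : (0 : ℝ) < (w j0 : ℝ) := by exact_mod_cast Nat.lt_of_lt_of_le Nat.zero_lt_one hj0w
    set t := (x j0 + min (x k + (w k : ℝ)) (x j0 + (w j0 : ℝ))) / 2 with ht
    have hmin : x j0 < min (x k + (w k : ℝ)) (x j0 + (w j0 : ℝ)) := lt_min hlt (by linarith)
    have ht1 : x j0 < t := by rw [ht]; linarith
    have ht2 : t < x k + (w k : ℝ) := by
      have h1 := min_le_left (x k + (w k : ℝ)) (x j0 + (w j0 : ℝ))
      rw [ht]; linarith
    have ht3 : t < x j0 + (w j0 : ℝ) := by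
      have h1 := min_le_right (x k + (w k : ℝ)) (x j0 + (w j0 : ℝ))
      rw [ht]; linarith
    have hmem1 : ((t, v) : ℝ × ℝ) ∈
        Set.Ioo (x j0) (x j0 + (w j0 : ℝ)) ×ˢ Set.Ioo (y j0) (y j0 + h j0) :=
      ⟨⟨ht1, ht3⟩, hv1⟩
    have hmem2 : ((t, v) : ℝ × ℝ) ∈
        Set.Ioo (x k) (x k + (w k : ℝ)) ×ˢ Set.Ioo (y k) (y k + h k) :=
      ⟨⟨lt_of_le_of_lt hxk ht1, ht2⟩, hv2⟩
    exact Set.disjoint_left.mp (hdis j0 hj0 k hkJ hkne hσ.symm) hmem1 hmem2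
  set T := J'.filter (fun k => σ k = σ j0 ∧
      ((Set.Ioo (y j0) (y j0 + h j0)) ∩ (Set.Ioo (y k) (y k + h k))).Nonempty) with hT
  set Fp := insert (0 : ℝ) (T.image fun k => x' k + (w k : ℝ)) with hFp
  have hFpne : Fp.Nonempty := ⟨0, Finset.mem_insert_self _ _⟩
  set p := Fp.max' hFpne with hp
  have hp0 : (0 : ℝ) ≤ p := Finset.le_max' Fp 0 (Finset.mem_insert_self _ _)
  have hple : p ≤ x j0 := by
    apply Finset.max'_le
    intro z hz
    rcases Finset.mem_insert.mp hz with rfl | hz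
    · exact hx j0 hj0
    · obtain ⟨k, hk, rfl⟩ := Finset.mem_image.mp hz
      obtain ⟨hk', hσ, hov⟩ := Finset.mem_filter.mp hk
      have h1 := keyA k hk' hσ hov
      have h2 := (hle k hk').2
      linarith
  have hub : ∀ k ∈ J', σ k = σ j0 →
      ((Set.Ioo (y j0) (y j0 + h j0)) ∩ (Set.Ioo (y k) (y k + h k))).Nonempty →
      x' k + (w k : ℝ) ≤ p := by
    intro k hk hσ hov
    have hkT : k ∈ T := by
      rw [hT]
      simp only [Finset.mem_filter]
      exact ⟨hk, hσ, hov⟩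
    exact Finset.le_max' Fp (x' k + (w k : ℝ))
      (Finset.mem_insert_of_mem (Finset.mem_image_of_mem _ hkT))
  refine ⟨Function.update x' j0 p, ?_, ?_, ?_⟩
  · intro j hj
    by_cases hjj : j = j0
    · subst hjj; rw [Function.update_self]; exact ⟨hp0, hple⟩
    · rw [Function.update_of_ne hjj]
      exact hle j (Finset.mem_erase.mpr ⟨hjj, hj⟩)
  · intro j hj
    by_cases hjj : j = j0
    · subst hjj
      rw [Function.update_self]
      have hpmem : p ∈ Fp := Finset.max'_mem Fp hFpne
      rcases Finset.mem_insert.mp hpmem with h0 | hmem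
      · exact ⟨∅, Finset.empty_subset _, by simp [h0]⟩
      · obtain ⟨k, hk, hkeq⟩ := Finset.mem_image.mp hmem
        obtain ⟨hk', -, -⟩ := Finset.mem_filter.mp hk
        obtain ⟨S, hS, hsum⟩ := hns k hk'
        have hknotS : k ∉ S := fun hkS => (Finset.mem_erase.mp (hS hkS)).1 rfl
        refine ⟨insert k S, ?_, ?_⟩
        · intro a ha
          rcases Finset.mem_insert.mp ha with rfl | ha
          · exact hk'
          · exact (Finset.erase_subset _ _) (hS ha)
        · rw [Finset.sum_insert hknotS, ← hsum]
          linarith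
    · obtain ⟨S, hS, hsum⟩ := hns j (Finset.mem_erase.mpr ⟨hjj, hj⟩)
      refine ⟨S, hS.trans (Finset.erase_subset_erase _ (J.erase_subset j0)), ?_⟩
      rw [Function.update_of_ne hjj]; exact hsum
  · have hone : ∀ k ∈ J', σ j0 = σ k →
        Disjoint (Set.Ioo p (p + (w j0 : ℝ)) ×ˢ Set.Ioo (y j0) (y j0 + h j0))
                 (Set.Ioo (x' k) (x' k + (w k : ℝ)) ×ˢ Set.Ioo (y k) (y k + h k)) := by
      intro k hk hσ
      by_cases hov : ((Set.Ioo (y j0) (y j0 + h j0)) ∩ (Set.Ioo (y k) (y k + h k))).Nonempty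
      · exact prodDisjLeft ((iooDisj (hub k hk hσ.symm hov)).symm)
      · exact prodDisjRight (Set.disjoint_left.mpr fun v hv hv' => hov ⟨v, hv, hv'⟩)
    intro j hj k hk hjk hσ
    by_cases hjj : j = j0
    · subst hjj
      have hk' : k ∈ J' := Finset.mem_erase.mpr ⟨Ne.symm hjk, hk⟩
      rw [Function.update_self, Function.update_of_ne (Ne.symm hjk)]
      exact hone k hk' hσ
    · by_cases hkk : k = j0
      · subst hkk
        have hj' : j ∈ J' := Finset.mem_erase.mpr ⟨hjj, hj⟩
        rw [Function.update_self, Function.update_of_ne hjj]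
        exact (hone j hj' hσ.symm).symm
      · rw [Function.update_of_ne hjj, Function.update_of_ne hkk]
        exact hd j (Finset.mem_erase.mpr ⟨hjj, hj⟩) k (Finset.mem_erase.mpr ⟨hkk, hk⟩) hjk hσ

end GMSPPAux

/-- **Normal-position dominance for GMSPP.**  For every feasible GMSPP packing
`(σ, x, y)` with strip heights `Hs` there is a feasible GMSPP packing with the
same assignment and the same strip heights in which every x-coordinate is a
normal position on its strip.  Consequently, the infimum cost
`∑ i, C i * Wd i * Hs i` over normal-position packings equals the infimum
over all feasible GMSPP packings. -/
theorem gmspp_normal_position_dominance {ι κ : Type*} [DecidableEq ι]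
    (J : Finset ι) (I : Finset κ) (w : ι → ℕ) (h : ι → ℝ) (Wd : κ → ℕ)
    (C : κ → ℝ)
    (hw : ∀ j ∈ J, 1 ≤ w j) (hh : ∀ j ∈ J, 0 < h j)
    (hW : ∀ i ∈ I, 1 ≤ Wd i) (hC : ∀ i ∈ I, 0 < C i) :
    (∀ (σ : ι → κ) (x y : ι → ℝ) (Hs : κ → ℝ),
      IsGMSPPPacking J I (fun j => (w j : ℝ)) h (fun i => (Wd i : ℝ)) Hs σ x y →
      ∃ x' y' : ι → ℝ,
        IsGMSPPPacking J I (fun j => (w j : ℝ)) h (fun i => (Wd i : ℝ)) Hs σ x' y' ∧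
        ∀ j ∈ J, x' j ∈ NormalPos J w (Wd (σ j)) j) ∧
    sInf { z : ℝ | ∃ (σ : ι → κ) (x y : ι → ℝ) (Hs : κ → ℝ),
        IsGMSPPPacking J I (fun j => (w j : ℝ)) h (fun i => (Wd i : ℝ)) Hs σ x y ∧
        (∀ j ∈ J, x j ∈ NormalPos J w (Wd (σ j)) j) ∧
        z = ∑ i ∈ I, C i * (Wd i : ℝ) * Hs i } =
    sInf { z : ℝ | ∃ (σ : ι → κ) (x y : ι → ℝ) (Hs : κ → ℝ),
        IsGMSPPPacking J I (fun j => (w j : ℝ)) h (fun i => (Wd i : ℝ)) Hs σ x y ∧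
        z = ∑ i ∈ I, C i * (Wd i : ℝ) * Hs i } := by
    classical
  have main : ∀ (σ : ι → κ) (x y : ι → ℝ) (Hs : κ → ℝ),
      IsGMSPPPacking J I (fun j => (w j : ℝ)) h (fun i => (Wd i : ℝ)) Hs σ x y →
      ∃ x' y' : ι → ℝ,
        IsGMSPPPacking J I (fun j => (w j : ℝ)) h (fun i => (Wd i : ℝ)) Hs σ x' y' ∧
        ∀ j ∈ J, x' j ∈ NormalPos J w (Wd (σ j)) j := by
    intro σ x y Hs hpack
    obtain ⟨hH, hσI, hbound, hdis⟩ := hpack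
    obtain ⟨x', hle, hns, hd⟩ := gmspp_key w h σ y x J hw
      (fun j hj => (hbound j hj).1) hdis
    refine ⟨x', y, ⟨hH, hσI, ?_, hd⟩, ?_⟩
    · intro j hj
      obtain ⟨hx0, hy0, hxW, hyH⟩ := hbound j hj
      refine ⟨(hle j hj).1, hy0, ?_, hyH⟩
      have := (hle j hj).2
      simp only at hxW ⊢
      linarith
    · intro j hj
      obtain ⟨hx0, hy0, hxW, hyH⟩ := hbound j hj
      refine ⟨hns j hj, (hle j hj).1, ?_⟩
      have := (hle j hj).2
      simp only at hxW ⊢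
      linarith
  refine ⟨main, ?_⟩
  congr 1
  ext z
  simp only [Set.mem_setOf_eq]
  constructor
  · rintro ⟨σ, x, y, Hs, hp, -, hz⟩
    exact ⟨σ, x, y, Hs, hp, hz⟩
  · rintro ⟨σ, x, y, Hs, hp, hz⟩
    obtain ⟨x', y', hp', hnp⟩ := main σ x y Hs hp
    exact ⟨σ, x', y', Hs, hp', hnp, hz⟩
end

section
/- In any packing of a finite set J of items on a strip of width W within height H, for every real number q with 0 ≤ q < W, the total height of the items covering column q is at most the strip height: Σ_{j ∈ J : x_j ≤ q < x_j + w_j} h_j ≤ H. (Validity of the column-load constraints of the (P|cont|C_max) relaxation.) -/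
open scoped Classical

/-- **Validity of the column-load constraints of the (P|cont|C_max) relaxation.**
In any packing of `J` on a strip of width `W` within height `H`, for every real
column `q` with `0 ≤ q < W`, the total height of the items covering column `q`
is at most the strip height `H`. -/
theorem column_load_valid {ι : Type*} (J : Finset ι) (w h : ι → ℝ) (W H : ℝ)
    (x y : ι → ℝ)
    (hw : ∀ j ∈ J, 0 < w j) (hh : ∀ j ∈ J, 0 < h j) (hH : 0 ≤ H)
    (hpack : IsPacking J w h W H x y)
    (q : ℝ) (hq0 : 0 ≤ q) (hqW : q < W) :
    ∑ j ∈ J.filter (fun j => x j ≤ q ∧ q < x j + w j), h j ≤ H := by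
  obtain ⟨hbound, hdisj⟩ := hpack
  set S := J.filter (fun j => x j ≤ q ∧ q < x j + w j) with hS
  -- y-intervals of items in S are pairwise disjoint
  have hydisj : ∀ j ∈ S, ∀ k ∈ S, j ≠ k →
      Disjoint (Set.Ioo (y j) (y j + h j)) (Set.Ioo (y k) (y k + h k)) := by
    intro j hj k hk hjk
    simp only [hS, Finset.mem_filter] at hj hk
    obtain ⟨hjJ, hjx, hjw⟩ := hj
    obtain ⟨hkJ, hkx, hkw⟩ := hk
    rw [Set.disjoint_left]
    intro t htj htk
    set q' := q + min (x j + w j - q) (x k + w k - q) / 2 with hq'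
    have hm : 0 < min (x j + w j - q) (x k + w k - q) := by
      apply lt_min <;> linarith
    have hmj := min_le_left (x j + w j - q) (x k + w k - q)
    have hmk := min_le_right (x j + w j - q) (x k + w k - q)
    have hqgt : q < q' := by
      rw [hq']
      linarith
    have hqj : q' ∈ Set.Ioo (x j) (x j + w j) := by
      constructor
      · linarith
      · rw [hq']; linarith
    have hqk : q' ∈ Set.Ioo (x k) (x k + w k) := by
      constructor
      · linarith
      · rw [hq']; linarith
    have := (hdisj j hjJ k hkJ hjk).le_bot
      (Set.mem_inter (Set.mk_mem_prod hqj htj) (Set.mk_mem_prod hqk htk))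
    exact this
  -- measure argument
  have hsub : ∀ j ∈ S, Set.Ioo (y j) (y j + h j) ⊆ Set.Icc 0 H := by
    intro j hj
    simp only [hS, Finset.mem_filter] at hj
    obtain ⟨hjJ, -⟩ := hj
    obtain ⟨-, hy0, -, hyH⟩ := hbound j hjJ
    exact Set.Ioo_subset_Icc_self.trans (Set.Icc_subset_Icc hy0 hyH)
  have hmeas : (∑ j ∈ S, MeasureTheory.volume (Set.Ioo (y j) (y j + h j)))
      = MeasureTheory.volume (⋃ j ∈ S, Set.Ioo (y j) (y j + h j)) := by
    exact (MeasureTheory.measure_biUnion_finset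
      (fun j hj k hk hjk => hydisj j hj k hk hjk)
      (fun j _ => measurableSet_Ioo)).symm
  have hle : (∑ j ∈ S, MeasureTheory.volume (Set.Ioo (y j) (y j + h j)))
      ≤ ENNReal.ofReal H := by
    rw [hmeas]
    calc MeasureTheory.volume (⋃ j ∈ S, Set.Ioo (y j) (y j + h j))
        ≤ MeasureTheory.volume (Set.Icc (0:ℝ) H) :=
          MeasureTheory.measure_mono (Set.iUnion₂_subset hsub)
      _ = ENNReal.ofReal H := by rw [Real.volume_Icc, sub_zero]
  have hvol : ∀ j ∈ S, MeasureTheory.volume (Set.Ioo (y j) (y j + h j))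
      = ENNReal.ofReal (h j) := by
    intro j _
    rw [Real.volume_Ioo, add_sub_cancel_left]
  rw [Finset.sum_congr rfl hvol] at hle
  have hhS : ∀ j ∈ S, 0 ≤ h j := fun j hj =>
    (hh j (Finset.mem_filter.mp hj).1).le
  rw [← ENNReal.ofReal_sum_of_nonneg hhS] at hle
  exact (ENNReal.ofReal_le_ofReal_iff hH).mp hle
end

section
/- Let J be items with integer widths w_j ≥ 1 and integer heights h_j ≥ 1, and strips i ∈ I with integer widths W_i ≥ 1. Let (σ, x, y) be a feasible GMSPP packing with strip heights H_i in which every x-coordinate is a normal position: x_j ∈ W_{σ(j)}(j) for all j. Then the 0-1 vector defined by x_{ijp} = 1 if σ(j) = i and x_j = p, and x_{ijp} = 0 otherwise, together with the heights H_i, is a fractional solution: it satisfies the assignment constraints (each item is placed at exactly one position on one strip) and the column-load constraints (for every strip i and integer column 0 ≤ q ≤ W_i − 1, Σ_j Σ_{p ∈ W_i(j), q − w_j + 1 ≤ p ≤ q} h_j·x_{ijp} ≤ H_i). -/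
open MeasureTheory

open MeasureTheory

lemma sum_len_le_of_disjoint {ι : Type*} (T : Finset ι) (a b : ι → ℝ) (H : ℝ)
    (hH : 0 ≤ H)
    (hsub : ∀ j ∈ T, Set.Ioo (a j) (b j) ⊆ Set.Icc 0 H)
    (hdisj : ∀ j ∈ T, ∀ k ∈ T, j ≠ k →
      Disjoint (Set.Ioo (a j) (b j)) (Set.Ioo (a k) (b k))) :
    ∑ j ∈ T, (b j - a j) ≤ H := by
  have key : ∑ j ∈ T, volume (Set.Ioo (a j) (b j)) ≤ ENNReal.ofReal H := by
    rw [← measure_biUnion_finset]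
    · calc volume (⋃ j ∈ T, Set.Ioo (a j) (b j)) ≤ volume (Set.Icc (0:ℝ) H) := by
            apply measure_mono; exact Set.iUnion₂_subset hsub
        _ = ENNReal.ofReal H := by rw [Real.volume_Icc, sub_zero]
    · intro j hj k hk hjk; exact hdisj j hj k hk hjk
    · intro j hj; exact measurableSet_Ioo
  have h2 : ∑ j ∈ T, ENNReal.ofReal (b j - a j) ≤ ENNReal.ofReal H := by
    simpa [Real.volume_Ioo] using key
  calc ∑ j ∈ T, (b j - a j) ≤ ∑ j ∈ T, max (b j - a j) 0 :=
        Finset.sum_le_sum fun j _ => le_max_left _ _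
    _ = (∑ j ∈ T, ENNReal.ofReal (b j - a j)).toReal := by
        rw [ENNReal.toReal_sum (fun j _ => ENNReal.ofReal_ne_top)]
        exact Finset.sum_congr rfl fun j _ => rfl
    _ ≤ H := by
        have := ENNReal.toReal_mono ENNReal.ofReal_ne_top h2
        rwa [ENNReal.toReal_ofReal hH] at this


open scoped Classical

/-- `x j` is a normal position (as a real number). -/
def IsNormalPosition {ι : Type*} [DecidableEq ι] (J : Finset ι) (w : ι → ℕ)
    (Wi : ℕ) (j : ι) (xj : ℝ) : Prop :=
  ∃ p : ℕ, p ∈ NormalPosNat J w Wi j ∧ xj = (p : ℝ)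

/-- **Normal-position packings yield fractional solutions.**  Let `(σ, x, y)`
be a feasible GMSPP packing (integer widths `w j ≥ 1`, integer heights
`h j ≥ 1`, integer strip widths `Wd i ≥ 1`) in which every x-coordinate is a
normal position on its strip.  Then the 0-1 vector
`x_{ijp} = 1 ↔ (σ j = i ∧ x j = p)`, together with the heights `Hs`,
satisfies the assignment constraints (each item is placed at exactly one
position on one strip) and the column-load constraints. -/
theorem normal_packing_gives_fractional_solution {ι κ : Type*}
    [DecidableEq ι] [DecidableEq κ]
    (J : Finset ι) (I : Finset κ) (w h : ι → ℕ) (Wd : κ → ℕ)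
    (hw : ∀ j ∈ J, 1 ≤ w j) (hh : ∀ j ∈ J, 1 ≤ h j)
    (hW : ∀ i ∈ I, 1 ≤ Wd i)
    (σ : ι → κ) (x y : ι → ℝ) (Hs : κ → ℝ)
    (hpack : IsGMSPPPacking J I (fun j => (w j : ℝ)) (fun j => (h j : ℝ))
      (fun i => (Wd i : ℝ)) Hs σ x y)
    (hnp : ∀ j ∈ J, IsNormalPosition J w (Wd (σ j)) j (x j)) :
    (∀ j ∈ J, ∑ i ∈ I, ∑ p ∈ Finset.range (Wd i),
        (if σ j = i ∧ x j = (p : ℝ) then (1 : ℝ) else 0) = 1) ∧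
    (∀ i ∈ I, ∀ q < Wd i,
      ∑ j ∈ J, ∑ p ∈ (Finset.range (Wd i)).filter
          (fun p => p ∈ NormalPosNat J w (Wd i) j ∧ p ≤ q ∧ q < p + w j),
        (h j : ℝ) * (if σ j = i ∧ x j = (p : ℝ) then (1 : ℝ) else 0)
      ≤ Hs i) := by
  obtain ⟨hH0, hσI, hcoord, hdis⟩ := hpack
  constructor
  · intro j hj
    obtain ⟨p₀, ⟨_, hp₀le⟩, hx⟩ := hnp j hj
    have hp₀lt : p₀ < Wd (σ j) := by have := hw j hj; omega
    rw [Finset.sum_eq_single_of_mem (σ j) (hσI j hj)]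
    · rw [Finset.sum_eq_single_of_mem p₀ (Finset.mem_range.mpr hp₀lt)]
      · simp [hx]
      · intro p hp hne
        rw [if_neg]
        rintro ⟨-, hxp⟩
        exact hne (Nat.cast_injective (hx.symm.trans hxp)).symm
    · intro i hi hne
      apply Finset.sum_eq_zero
      intro p hp
      rw [if_neg]
      rintro ⟨h1, -⟩
      exact hne h1.symm
  · intro i hi q hq
    set C : ι → Prop := fun j => ∃ p : ℕ, p ∈ NormalPosNat J w (Wd i) j
        ∧ p ≤ q ∧ q < p + w j ∧ σ j = i ∧ x j = (p : ℝ) with hC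
    set T := J.filter C with hT
    have hLHS : (∑ j ∈ J, ∑ p ∈ (Finset.range (Wd i)).filter
          (fun p => p ∈ NormalPosNat J w (Wd i) j ∧ p ≤ q ∧ q < p + w j),
        (h j : ℝ) * (if σ j = i ∧ x j = (p : ℝ) then (1 : ℝ) else 0))
        = ∑ j ∈ T, (h j : ℝ) := by
      rw [hT, Finset.sum_filter]
      apply Finset.sum_congr rfl
      intro j hj
      by_cases hc : C j
      · obtain ⟨p₀, hnorm, hle, hlt, hσ, hx⟩ := hc
        rw [if_pos ⟨p₀, hnorm, hle, hlt, hσ, hx⟩]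
        have hnorm' : (∃ S ⊆ J.erase j, p₀ = ∑ k ∈ S, w k) ∧ p₀ + w j ≤ Wd i := hnorm
        have hp₀lt : p₀ < Wd i := by have := hw j hj; have := hnorm'.2; omega
        rw [Finset.sum_eq_single_of_mem p₀
          (Finset.mem_filter.mpr ⟨Finset.mem_range.mpr hp₀lt, hnorm, hle, hlt⟩)]
        · simp [hσ, hx]
        · intro p hp hne
          rw [if_neg, mul_zero]
          rintro ⟨-, hxp⟩
          exact hne (Nat.cast_injective (hx.symm.trans hxp)).symm
      · rw [if_neg hc]
        apply Finset.sum_eq_zero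
        intro p hp
        rw [Finset.mem_filter] at hp
        rw [if_neg, mul_zero]
        rintro ⟨hσ, hx⟩
        exact hc ⟨p, hp.2.1, hp.2.2.1, hp.2.2.2, hσ, hx⟩
    rw [hLHS]
    have key : ∀ j ∈ T, σ j = i ∧ (q : ℝ) + 1/2 ∈ Set.Ioo (x j) (x j + (w j : ℝ)) := by
      intro j hjT
      rw [hT, Finset.mem_filter] at hjT
      obtain ⟨p₀, hnorm, hle, hlt, hσ, hx⟩ := hjT.2
      refine ⟨hσ, ?_, ?_⟩
      · rw [hx]
        have : (p₀ : ℝ) ≤ q := Nat.cast_le.mpr hle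
        linarith
      · rw [hx]
        have : (q : ℝ) + 1 ≤ (p₀ : ℝ) + (w j : ℝ) := by
          have : q + 1 ≤ p₀ + w j := hlt
          exact_mod_cast this
        linarith
    have hbound := sum_len_le_of_disjoint T (fun j => y j) (fun j => y j + (h j : ℝ)) (Hs i)
      (hH0 i hi)
      (by
        intro j hjT t ht
        have hjJ : j ∈ J := Finset.mem_of_mem_filter j hjT
        obtain ⟨_, hy0, _, hyh⟩ := hcoord j hjJ
        have hσ := (key j hjT).1
        constructor
        · exact le_of_lt (lt_of_le_of_lt hy0 ht.1)
        · rw [← hσ]; exact le_of_lt (lt_of_lt_of_le ht.2 (by rw [hσ] at hyh ⊢; exact hyh))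
      )
      (by
        intro j hjT k hkT hjk
        have hjJ : j ∈ J := Finset.mem_of_mem_filter j hjT
        have hkJ : k ∈ J := Finset.mem_of_mem_filter k hkT
        obtain ⟨hσj, hxj⟩ := key j hjT
        obtain ⟨hσk, hxk⟩ := key k hkT
        have hd := hdis j hjJ k hkJ hjk (hσj.trans hσk.symm)
        rw [Set.disjoint_left] at hd ⊢
        intro t htj htk
        exact hd (Set.mk_mem_prod hxj htj) (Set.mk_mem_prod hxk htk)
      )
    calc ∑ j ∈ T, (h j : ℝ) = ∑ j ∈ T, ((y j + (h j : ℝ)) - y j) := by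
          apply Finset.sum_congr rfl; intro j _; ring
      _ ≤ Hs i := hbound
end

section
/- (Joint validity of the lifted combinatorial Benders' cut.) Let C be a finite set of items with integer widths w_j ≥ 1 and heights h_j > 0, let p_j* be positions with 0 ≤ p_j* ≤ W − w_j on a strip of width W, and let H̄ ≥ 0 be such that the y-check for C at positions p* and height H̄ is infeasible. Suppose intervals [ℓ_j, r_j] satisfy 0 ≤ ℓ_j ≤ p_j* ≤ r_j ≤ W − w_j for all j ∈ C, and ℓ_j + w_j ≥ r_k + 1 for every ordered pair of distinct j, k ∈ C that share a column at the original positions (i.e., p_j* < p_k* + w_k and p_k* < p_j* + w_j). Then for every choice of positions p_j ∈ [ℓ_j, r_j] (j ∈ C), the y-check for C at positions p and height H̄ is infeasible. Consequently, in every feasible GMSPP packing in which all items of C are placed on a common strip at x-coordinates p_j ∈ [ℓ_j, r_j], the height of that strip exceeds H̄. -/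
/-- The *y-check* for a finite set `C` of items with widths `w`, heights `h`,
fixed x-positions `p`, and height bound `H` is feasible: there exist `y j ≥ 0`
with `y j + h j ≤ H` such that any two distinct items sharing a column
(`p j < p k + w k` and `p k < p j + w j`) have disjoint open vertical
intervals. -/
def YCheckFeasible {ι : Type*} (C : Finset ι) (w h p : ι → ℝ) (H : ℝ) : Prop :=
  ∃ y : ι → ℝ,
    (∀ j ∈ C, 0 ≤ y j ∧ y j + h j ≤ H) ∧
    (∀ j ∈ C, ∀ k ∈ C, j ≠ k → p j < p k + w k → p k < p j + w j →
      Disjoint (Set.Ioo (y j) (y j + h j)) (Set.Ioo (y k) (y k + h k)))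

/-- **Joint validity of the lifted combinatorial Benders' cut.**  Suppose the
y-check for items `C` (integer widths `w j ≥ 1`, heights `h j > 0`) at
positions `pstar` (with `0 ≤ pstar j` and `pstar j + w j ≤ W`) and height
`H̄ ≥ 0` is infeasible, and intervals `[ℓ j, r j]` satisfy
`0 ≤ ℓ j ≤ pstar j ≤ r j ≤ W - w j` together with `ℓ j + w j ≥ r k + 1` for
every ordered pair of distinct items sharing a column at the original
positions.  Then the y-check is infeasible for every choice of positions
`p j ∈ [ℓ j, r j]`, and consequently in every feasible GMSPP packing in which
all items of `C` are placed on a common strip at x-coordinates within their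
intervals, the height of that strip exceeds `H̄`. -/
theorem lifted_benders_cut_valid {ι κ : Type*}
    (C : Finset ι) (w : ι → ℕ) (h : ι → ℝ) (W : ℕ)
    (pstar ℓ r : ι → ℝ) (Hbar : ℝ)
    (hw : ∀ j ∈ C, 1 ≤ w j) (hh : ∀ j ∈ C, 0 < h j) (hHbar : 0 ≤ Hbar)
    (hps : ∀ j ∈ C, 0 ≤ pstar j ∧ pstar j + (w j : ℝ) ≤ (W : ℝ))
    (hint : ∀ j ∈ C, 0 ≤ ℓ j ∧ ℓ j ≤ pstar j ∧ pstar j ≤ r j ∧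
      r j + (w j : ℝ) ≤ (W : ℝ))
    (hconf : ∀ j ∈ C, ∀ k ∈ C, j ≠ k →
      pstar j < pstar k + (w k : ℝ) → pstar k < pstar j + (w j : ℝ) →
      ℓ j + (w j : ℝ) ≥ r k + 1)
    (hinfeas : ¬ YCheckFeasible C (fun j => (w j : ℝ)) h pstar Hbar) :
    (∀ p : ι → ℝ, (∀ j ∈ C, ℓ j ≤ p j ∧ p j ≤ r j) →
      ¬ YCheckFeasible C (fun j => (w j : ℝ)) h p Hbar) ∧
    (∀ (J : Finset ι) (I : Finset κ) (Wd Hs : κ → ℝ) (σ : ι → κ)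
        (x y : ι → ℝ) (i : κ),
      C ⊆ J →
      IsGMSPPPacking J I (fun j => (w j : ℝ)) h Wd Hs σ x y →
      (∀ j ∈ C, σ j = i ∧ ℓ j ≤ x j ∧ x j ≤ r j) →
      Hbar < Hs i) := by
  -- A conflict at pstar transfers to any p within the intervals.
  have key : ∀ p : ι → ℝ, (∀ j ∈ C, ℓ j ≤ p j ∧ p j ≤ r j) →
      ¬ YCheckFeasible C (fun j => (w j : ℝ)) h p Hbar := by
    intro p hp hfeas
    obtain ⟨y, hy1, hy2⟩ := hfeas
    refine hinfeas ⟨y, hy1, ?_⟩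
    intro j hj k hk hjk h1 h2
    refine hy2 j hj k hk hjk ?_ ?_
    · -- p j < p k + w k
      have hcjk := hconf k hk j hj (Ne.symm hjk) h2 h1
      have := (hp j hj).2
      have := (hp k hk).1
      linarith
    · have hcjk := hconf j hj k hk hjk h1 h2
      have := (hp k hk).2
      have := (hp j hj).1
      linarith
  refine ⟨key, ?_⟩
  intro J I Wd Hs σ x y i hCJ hpack hplace
  by_contra hle
  push_neg at hle
  obtain ⟨_, _, hbnd, hdisj⟩ := hpack
  apply key x (fun j hj => ⟨(hplace j hj).2.1, (hplace j hj).2.2⟩)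
  refine ⟨y, ?_, ?_⟩
  · intro j hj
    obtain ⟨_, hy0, _, hyH⟩ := hbnd j (hCJ hj)
    exact ⟨hy0, by rw [(hplace j hj).1] at hyH; linarith⟩
  · intro j hj k hk hjk h1 h2
    have hd := hdisj j (hCJ hj) k (hCJ hk) hjk
      (by rw [(hplace j hj).1, (hplace k hk).1])
    -- the open x-intervals intersect
    have hwj : (1 : ℝ) ≤ (w j : ℝ) := by exact_mod_cast hw j hj
    have hwk : (1 : ℝ) ≤ (w k : ℝ) := by exact_mod_cast hw k hk
    have hmm : max (x j) (x k) < min (x j + (w j : ℝ)) (x k + (w k : ℝ)) := by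
      simp only [lt_min_iff, max_lt_iff]
      exact ⟨⟨by linarith, h2⟩, ⟨h1, by linarith⟩⟩
    set a := (max (x j) (x k) + min (x j + (w j : ℝ)) (x k + (w k : ℝ))) / 2 with ha
    have ha1 : a ∈ Set.Ioo (x j) (x j + (w j : ℝ)) := by
      constructor
      · have := le_max_left (x j) (x k); simp only [ha]; linarith
      · have := min_le_left (x j + (w j : ℝ)) (x k + (w k : ℝ))
        simp only [ha]; linarith
    have ha2 : a ∈ Set.Ioo (x k) (x k + (w k : ℝ)) := by
      constructor
      · have := le_max_right (x j) (x k); simp only [ha]; linarith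
      · have := min_le_right (x j + (w j : ℝ)) (x k + (w k : ℝ))
        simp only [ha]; linarith
    rw [Set.disjoint_left]
    intro b hb1 hb2
    have hm1 : ((a, b) : ℝ × ℝ) ∈ Set.Ioo (x j) (x j + (w j : ℝ)) ×ˢ
        Set.Ioo (y j) (y j + h j) := ⟨ha1, hb1⟩
    have hm2 : ((a, b) : ℝ × ℝ) ∈ Set.Ioo (x k) (x k + (w k : ℝ)) ×ˢ
        Set.Ioo (y k) (y k + h k) := ⟨ha2, hb2⟩
    exact Set.disjoint_left.mp hd hm1 hm2
end

section
/- (Validity of the combinatorial Benders' cut.) Let C be a finite set of items with widths w_j > 0 and heights h_j > 0, with fixed x-positions p_j, and let H̄ ≥ 0 be such that the y-check for C at positions p and height H̄ is infeasible. Then in every feasible GMSPP packing in which every item of C is assigned to one common strip i with x-coordinate equal to p_j, the height of that strip satisfies H_i > H̄. -/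
/-- **Validity of the combinatorial Benders' cut.**  If the y-check for a set
`C` of items at positions `p` and height `H̄ ≥ 0` is infeasible, then in every
feasible GMSPP packing in which every item of `C` is assigned to a common
strip `i` with x-coordinate equal to `p j`, the height of that strip satisfies
`Hs i > H̄`. -/
theorem combinatorial_benders_cut_valid {ι κ : Type*}
    (J : Finset ι) (I : Finset κ) (C : Finset ι)
    (w h : ι → ℝ) (Wd Hs : κ → ℝ) (σ : ι → κ) (x y : ι → ℝ)
    (p : ι → ℝ) (Hbar : ℝ) (i : κ)
    (hw : ∀ j ∈ J, 0 < w j) (hh : ∀ j ∈ J, 0 < h j)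
    (hC : C ⊆ J) (hHbar : 0 ≤ Hbar)
    (hinfeas : ¬ YCheckFeasible C w h p Hbar)
    (hpack : IsGMSPPPacking J I w h Wd Hs σ x y)
    (hpos : ∀ j ∈ C, σ j = i ∧ x j = p j) :
    Hbar < Hs i := by
  by_contra hle
  push_neg at hle
  obtain ⟨hHs, hσI, hbounds, hdisj⟩ := hpack
  apply hinfeas
  refine ⟨y, fun j hj => ?_, fun j hj k hk hjk h1 h2 => ?_⟩
  · obtain ⟨_, hy0, _, hyh⟩ := hbounds j (hC hj)
    exact ⟨hy0, le_trans ((hpos j hj).1 ▸ hyh) hle⟩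
  · have hσ : σ j = σ k := by rw [(hpos j hj).1, (hpos k hk).1]
    have hd := hdisj j (hC hj) k (hC hk) hjk hσ
    have hxj := (hpos j hj).2
    have hxk := (hpos k hk).2
    set a := (max (x j) (x k) + min (x j + w j) (x k + w k)) / 2 with ha
    have hlohi : max (x j) (x k) < min (x j + w j) (x k + w k) := by
      have hwj := hw j (hC hj); have hwk := hw k (hC hk)
      rw [hxj, hxk]
      simp only [max_lt_iff, lt_min_iff]
      constructor <;> constructor <;> linarith
    have haj : a ∈ Set.Ioo (x j) (x j + w j) := by
      constructor
      · calc x j ≤ max (x j) (x k) := le_max_left _ _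
          _ < a := by rw [ha]; linarith
      · calc a < min (x j + w j) (x k + w k) := by rw [ha]; linarith
          _ ≤ x j + w j := min_le_left _ _
    have hak : a ∈ Set.Ioo (x k) (x k + w k) := by
      constructor
      · calc x k ≤ max (x j) (x k) := le_max_right _ _
          _ < a := by rw [ha]; linarith
      · calc a < min (x j + w j) (x k + w k) := by rw [ha]; linarith
          _ ≤ x k + w k := min_le_right _ _
    rw [Set.disjoint_left]
    intro b hb hb'
    exact Set.disjoint_left.mp hd (Set.mk_mem_prod haj hb) (Set.mk_mem_prod hak hb')
end

section
/- (Vertical integer rounding of the y-check.) Let C be a finite set of items with widths w_j > 0, integer heights h_j ≥ 1, fixed x-positions p_j, and a real height bound H ≥ 0. If the y-check for C at positions p and height H is feasible, then it is also feasible at height ⌊H⌋, and moreover there is a feasible assignment in which every y_j is a sum of heights of items in C \ {j} (in particular a nonnegative integer). In particular, if the y-check is infeasible at an integer height H̄, then it is infeasible at every height H < H̄ + 1. -/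
lemma ycheck_aux {ι : Type*} [DecidableEq ι] (w : ι → ℝ) (h : ι → ℕ) (p : ι → ℝ) :
    ∀ C : Finset ι, (∀ j ∈ C, 1 ≤ h j) → ∀ y : ι → ℝ,
    (∀ j ∈ C, 0 ≤ y j) →
    (∀ j ∈ C, ∀ k ∈ C, j ≠ k → p j < p k + w k → p k < p j + w j →
      Disjoint (Set.Ioo (y j) (y j + (h j : ℝ))) (Set.Ioo (y k) (y k + (h k : ℝ)))) →
    ∃ y' : ι → ℕ,
      (∀ j ∈ C, (y' j : ℝ) ≤ y j) ∧
      (∀ j ∈ C, ∀ k ∈ C, j ≠ k → p j < p k + w k → p k < p j + w j →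
        y' j + h j ≤ y' k ∨ y' k + h k ≤ y' j) ∧
      (∀ j ∈ C, ∃ S ⊆ C.erase j, y' j = ∑ k ∈ S, h k) := by
  classical
  intro C
  induction C using Finset.strongInduction with
  | _ C ih =>
    intro hh y hy0 hdisj
    rcases C.eq_empty_or_nonempty with rfl | hne
    · exact ⟨fun _ => 0, by simp, by simp, by simp⟩
    obtain ⟨j₀, hj₀, hmax⟩ := C.exists_max_image y hne
    set C' := C.erase j₀ with hC'
    obtain ⟨y', h1, h2, h3⟩ := ih C' (Finset.erase_ssubset hj₀)
      (fun j hj => hh j (Finset.mem_of_mem_erase hj)) y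
      (fun j hj => hy0 j (Finset.mem_of_mem_erase hj))
      (fun j hj k hk hjk h1 h2 => hdisj j (Finset.mem_of_mem_erase hj)
        k (Finset.mem_of_mem_erase hk) hjk h1 h2)
    set T := C'.filter (fun k => p j₀ < p k + w k ∧ p k < p j₀ + w j₀) with hT
    -- every item overlapping j₀ lies (in the original assignment) below y j₀
    have key : ∀ k ∈ T, y k + (h k : ℝ) ≤ y j₀ := by
      intro k hk
      rw [hT, Finset.mem_filter] at hk
      obtain ⟨hk', hov1, hov2⟩ := hk
      have hkC : k ∈ C := Finset.mem_of_mem_erase hk'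
      have hkj : k ≠ j₀ := Finset.ne_of_mem_erase hk'
      have hd := hdisj j₀ hj₀ k hkC (Ne.symm hkj) hov1 hov2
      rw [Set.Ioo_disjoint_Ioo] at hd
      have hj1 : (1 : ℝ) ≤ (h j₀ : ℝ) := by exact_mod_cast hh j₀ hj₀
      have hk1 : (1 : ℝ) ≤ (h k : ℝ) := by exact_mod_cast hh k hkC
      rcases le_or_gt (y k + (h k : ℝ)) (y j₀) with hle | hlt
      · exact hle
      · exfalso
        have hky : y k ≤ y j₀ := hmax k hkC
        rw [max_eq_left hky] at hd
        rcases min_le_iff.mp hd with h' | h' <;> linarith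
    set v : ℕ := T.sup (fun k => y' k + h k) with hv
    refine ⟨Function.update y' j₀ v, ?_, ?_, ?_⟩
    · intro j hj
      rcases eq_or_ne j j₀ with rfl | hne'
      · rw [Function.update_self]
        rcases T.eq_empty_or_nonempty with hTe | hTne
        · rw [hv, hTe]; simpa using hy0 j hj
        · obtain ⟨k, hkT, hvk⟩ := T.exists_mem_eq_sup hTne (fun k => y' k + h k)
          have hkC' : k ∈ C' := (Finset.mem_filter.mp hkT).1
          have : (y' k : ℝ) + (h k : ℝ) ≤ y k + (h k : ℝ) := by
            linarith [h1 k hkC']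
          rw [hv, hvk]
          push_cast
          linarith [key k hkT]
      · rw [Function.update_of_ne hne']
        exact h1 j (Finset.mem_erase.mpr ⟨hne', hj⟩)
    · intro j hj k hk hjk hov1 hov2
      rcases eq_or_ne j j₀ with rfl | hne1
      · have hkC' : k ∈ C' := Finset.mem_erase.mpr ⟨Ne.symm hjk, hk⟩
        have hkT : k ∈ T := Finset.mem_filter.mpr ⟨hkC', hov1, hov2⟩
        right
        rw [Function.update_self, Function.update_of_ne (Ne.symm hjk)]
        exact Finset.le_sup (f := fun k => y' k + h k) hkT
      rcases eq_or_ne k j₀ with rfl | hne2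
      · have hjC' : j ∈ C' := Finset.mem_erase.mpr ⟨hne1, hj⟩
        have hjT : j ∈ T := Finset.mem_filter.mpr ⟨hjC', hov2, hov1⟩
        left
        rw [Function.update_self, Function.update_of_ne hne1]
        exact Finset.le_sup (f := fun k => y' k + h k) hjT
      · rw [Function.update_of_ne hne1, Function.update_of_ne hne2]
        exact h2 j (Finset.mem_erase.mpr ⟨hne1, hj⟩) k (Finset.mem_erase.mpr ⟨hne2, hk⟩)
          hjk hov1 hov2
    · intro j hj
      rcases eq_or_ne j j₀ with rfl | hne'
      · rw [Function.update_self]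
        rcases T.eq_empty_or_nonempty with hTe | hTne
        · exact ⟨∅, Finset.empty_subset _, by rw [hv, hTe]; simp⟩
        · obtain ⟨k, hkT, hvk⟩ := T.exists_mem_eq_sup hTne (fun k => y' k + h k)
          have hkC' : k ∈ C' := (Finset.mem_filter.mp hkT).1
          obtain ⟨S, hS, hSsum⟩ := h3 k hkC'
          refine ⟨insert k S, ?_, ?_⟩
          · intro x hx
            rcases Finset.mem_insert.mp hx with rfl | hx'
            · exact hkC'
            · exact Finset.mem_of_mem_erase (hS hx')
          · have hkS : k ∉ S := fun hkS => (Finset.ne_of_mem_erase (hS hkS)) rfl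
            rw [Finset.sum_insert hkS, hv, hvk, hSsum]
            ring
      · rw [Function.update_of_ne hne']
        obtain ⟨S, hS, hSsum⟩ := h3 j (Finset.mem_erase.mpr ⟨hne', hj⟩)
        refine ⟨S, ?_, hSsum⟩
        intro x hx
        have := hS hx
        rw [Finset.mem_erase] at this ⊢
        exact ⟨this.1, Finset.mem_of_mem_erase this.2⟩

/-- **Vertical integer rounding of the y-check.**  For items with integer
heights `h j ≥ 1`:  (1) if the y-check is feasible at a real height `H ≥ 0`,
then it is feasible at `⌊H⌋`, via an assignment in which every `y j` is a sum
of heights of a subset of the items of `C \ {j}`; and (2) if the y-check is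
infeasible at an integer height `H̄`, then it is infeasible at every height
`H' < H̄ + 1`. -/
theorem ycheck_integer_rounding {ι : Type*} [DecidableEq ι]
    (C : Finset ι) (w : ι → ℝ) (h : ι → ℕ) (p : ι → ℝ)
    (hw : ∀ j ∈ C, 0 < w j) (hh : ∀ j ∈ C, 1 ≤ h j) :
    (∀ H : ℝ, 0 ≤ H →
      YCheckFeasible C w (fun j => (h j : ℝ)) p H →
      ∃ y : ι → ℝ,
        (∀ j ∈ C, 0 ≤ y j ∧ y j + (h j : ℝ) ≤ (⌊H⌋ : ℝ)) ∧
        (∀ j ∈ C, ∀ k ∈ C, j ≠ k → p j < p k + w k → p k < p j + w j →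
          Disjoint (Set.Ioo (y j) (y j + (h j : ℝ)))
                   (Set.Ioo (y k) (y k + (h k : ℝ)))) ∧
        (∀ j ∈ C, ∃ S ⊆ C.erase j, y j = ∑ k ∈ S, (h k : ℝ))) ∧
    (∀ Hbar : ℕ,
      ¬ YCheckFeasible C w (fun j => (h j : ℝ)) p (Hbar : ℝ) →
      ∀ H' : ℝ, H' < (Hbar : ℝ) + 1 →
        ¬ YCheckFeasible C w (fun j => (h j : ℝ)) p H') := by
  have part1 : ∀ H : ℝ, 0 ≤ H →
      YCheckFeasible C w (fun j => (h j : ℝ)) p H →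
      ∃ y : ι → ℝ,
        (∀ j ∈ C, 0 ≤ y j ∧ y j + (h j : ℝ) ≤ (⌊H⌋ : ℝ)) ∧
        (∀ j ∈ C, ∀ k ∈ C, j ≠ k → p j < p k + w k → p k < p j + w j →
          Disjoint (Set.Ioo (y j) (y j + (h j : ℝ)))
                   (Set.Ioo (y k) (y k + (h k : ℝ)))) ∧
        (∀ j ∈ C, ∃ S ⊆ C.erase j, y j = ∑ k ∈ S, (h k : ℝ)) := by
    intro H hH ⟨y, hyb, hyd⟩
    obtain ⟨y', h1, h2, h3⟩ := ycheck_aux w h p C hh y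
      (fun j hj => (hyb j hj).1) hyd
    refine ⟨fun j => (y' j : ℝ), ?_, ?_, ?_⟩
    · intro j hj
      refine ⟨by positivity, ?_⟩
      have hb : ((y' j + h j : ℕ) : ℝ) ≤ H := by
        push_cast
        linarith [h1 j hj, (hyb j hj).2]
      have : ((y' j + h j : ℕ) : ℤ) ≤ ⌊H⌋ := Int.le_floor.mpr (by exact_mod_cast hb)
      calc (y' j : ℝ) + (h j : ℝ) = ((y' j + h j : ℕ) : ℝ) := by push_cast; ring
        _ ≤ (⌊H⌋ : ℝ) := by exact_mod_cast this
    · intro j hj k hk hjk hov1 hov2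
      rcases h2 j hj k hk hjk hov1 hov2 with hle | hle
      · have : (y' j : ℝ) + (h j : ℝ) ≤ (y' k : ℝ) := by exact_mod_cast hle
        exact Set.disjoint_of_subset (Set.Ioo_subset_Iio_self.trans (Set.Iio_subset_Iic_self))
          (Set.Ioo_subset_Ioi_self.trans (Set.Ioi_subset_Ioi this))
          (Set.Iic_disjoint_Ioi le_rfl)
      · have : (y' k : ℝ) + (h k : ℝ) ≤ (y' j : ℝ) := by exact_mod_cast hle
        exact (Set.disjoint_of_subset (Set.Ioo_subset_Iio_self.trans (Set.Iio_subset_Iic_self))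
          (Set.Ioo_subset_Ioi_self.trans (Set.Ioi_subset_Ioi this))
          (Set.Iic_disjoint_Ioi le_rfl)).symm
    · intro j hj
      obtain ⟨S, hS, hSsum⟩ := h3 j hj
      exact ⟨S, hS, by show ((y' j : ℕ) : ℝ) = _; rw [hSsum]; push_cast; ring⟩
  refine ⟨part1, ?_⟩
  intro Hbar hinf H' hH' hfeas
  rcases lt_or_ge H' 0 with hneg | hpos
  · obtain ⟨y, hyb, _⟩ := hfeas
    rcases C.eq_empty_or_nonempty with rfl | ⟨j, hj⟩
    · exact hinf ⟨y, by simp, by simp⟩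
    · have h1 : (1 : ℝ) ≤ (h j : ℝ) := by exact_mod_cast hh j hj
      linarith [(hyb j hj).1, (hyb j hj).2]
  · obtain ⟨y, hy1, hy2, _⟩ := part1 H' hpos hfeas
    have hfl : (⌊H'⌋ : ℝ) ≤ (Hbar : ℝ) := by
      have hfl1 : (⌊H'⌋ : ℝ) ≤ H' := Int.floor_le H'
      have hfl2 : (⌊H'⌋ : ℝ) < (Hbar : ℝ) + 1 := lt_of_le_of_lt hfl1 hH'
      have hfl3 : ⌊H'⌋ < (Hbar : ℤ) + 1 := by exact_mod_cast hfl2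
      exact_mod_cast Int.lt_add_one_iff.mp hfl3
    exact hinf ⟨y, fun j hj => ⟨(hy1 j hj).1, le_trans (hy1 j hj).2 hfl⟩, hy2⟩
end

section
/- (Validity of the H_i-aware combinatorial Benders' cut.) Let items J have integer widths w_j ≥ 1 and integer heights h_j ≥ 1 and strips integer widths W_i ≥ 1. Let i be a strip, C ⊆ J a subset of items, p_j ∈ W_i(j) positions for j ∈ C, and H̄ a nonnegative integer such that the y-check for C at positions p and height H̄ is infeasible. Then every feasible GMSPP packing (σ, x, y) with x-coordinates restricted to normal positions, encoded by the 0-1 variables x_{i'jp} (equal to 1 exactly when σ(j) = i' and x_j = p) and strip heights H_{i'}, satisfies the cut inequality (H̄ + 1)·Σ_{j ∈ C} x_{i,j,p_j} − H_i ≤ (H̄ + 1)·(|C| − 1). In particular, if all items in C occupy their positions p_j on strip i, then H_i ≥ H̄ + 1. -/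
open scoped Classical

lemma overlap_pt {a b c d : ℝ} (hab : a < b) (hcd : c < d) (had : a < d)
    (hcb : c < b) : ((max a c + min b d) / 2) ∈ Set.Ioo a b ∩ Set.Ioo c d := by
  have hM : max a c < min b d := max_lt (lt_min hab had) (lt_min hcb hcd)
  have h1 : max a c < (max a c + min b d) / 2 := by linarith
  have h2 : (max a c + min b d) / 2 < min b d := by linarith
  exact ⟨⟨lt_of_le_of_lt (le_max_left a c) h1, lt_of_lt_of_le h2 (min_le_left b d)⟩,
    ⟨lt_of_le_of_lt (le_max_right a c) h1, lt_of_lt_of_le h2 (min_le_right b d)⟩⟩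

lemma not_disjoint_Ioo {a b c d : ℝ} (hab : a < b) (hcd : c < d) (had : a < d)
    (hcb : c < b) : ¬ Disjoint (Set.Ioo a b) (Set.Ioo c d) := by
  rw [Set.not_disjoint_iff]
  obtain ⟨h1, h2⟩ := overlap_pt hab hcd had hcb
  exact ⟨_, h1, h2⟩

lemma disjoint_Ioo_of_le {a b c d : ℝ} (h : b ≤ c) :
    Disjoint (Set.Ioo a b) (Set.Ioo c d) := by
  rw [Set.disjoint_left]
  rintro t ⟨_, h1⟩ ⟨h2, _⟩
  linarith

lemma top_le_of_disjoint {a b ha hb : ℝ} (hpa : 0 < ha) (hpb : 0 < hb)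
    (hle : a ≤ b)
    (hd : Disjoint (Set.Ioo a (a + ha)) (Set.Ioo b (b + hb))) : a + ha ≤ b := by
  by_contra hc
  push_neg at hc
  exact not_disjoint_Ioo (by linarith) (by linarith) (by linarith) hc hd

lemma prod_disjoint_snd {A A' B B' : Set ℝ}
    (h : Disjoint (A ×ˢ B) (A' ×ˢ B')) (hne : (A ∩ A').Nonempty) :
    Disjoint B B' := by
  obtain ⟨a, ha, ha'⟩ := hne
  rw [Set.disjoint_left]
  intro t ht ht'
  exact Set.disjoint_left.1 h (Set.mk_mem_prod ha ht) (Set.mk_mem_prod ha' ht')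

/-- Integerization: any feasible arrangement of items (given conflicts via
positions/widths) can be pushed down to integer `y`-coordinates. -/
lemma integerize {ι : Type*} [DecidableEq ι] (h : ι → ℕ) (pr wr : ι → ℝ) :
    ∀ C : Finset ι, (∀ j ∈ C, 1 ≤ h j) → ∀ y : ι → ℝ,
    (∀ j ∈ C, 0 ≤ y j) →
    (∀ j ∈ C, ∀ k ∈ C, j ≠ k → pr j < pr k + wr k → pr k < pr j + wr j →
      Disjoint (Set.Ioo (y j) (y j + h j)) (Set.Ioo (y k) (y k + h k))) →
    ∃ z : ι → ℕ, (∀ j ∈ C, (z j : ℝ) ≤ y j) ∧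
    (∀ j ∈ C, ∀ k ∈ C, j ≠ k → pr j < pr k + wr k → pr k < pr j + wr j →
      Disjoint (Set.Ioo ((z j : ℝ)) ((z j : ℝ) + h j))
               (Set.Ioo ((z k : ℝ)) ((z k : ℝ) + h k))) := by
  intro C
  induction C using Finset.strongInduction with
  | _ C ih =>
    rcases C.eq_empty_or_nonempty with rfl | hne
    · intro _ y _ _
      exact ⟨fun _ => 0, by simp, by simp⟩
    intro hh y hy0 hdisj
    obtain ⟨j₀, hj₀C, hj₀max⟩ := Finset.exists_max_image C y hne
    obtain ⟨z, hz1, hz2⟩ := ih (C.erase j₀) (Finset.erase_ssubset hj₀C)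
      (fun j hj => hh j (Finset.mem_of_mem_erase hj)) y
      (fun j hj => hy0 j (Finset.mem_of_mem_erase hj))
      (fun j hj k hk hjk h1 h2 => hdisj j (Finset.mem_of_mem_erase hj)
        k (Finset.mem_of_mem_erase hk) hjk h1 h2)
    set F : Finset ι :=
      (C.erase j₀).filter (fun k => pr j₀ < pr k + wr k ∧ pr k < pr j₀ + wr j₀)
      with hF
    set Z₀ : ℕ := F.sup (fun k => z k + h k) with hZ₀
    -- every conflicting item fits below `y j₀`
    have hbelow : ∀ k ∈ F, (z k : ℝ) + h k ≤ y j₀ := by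
      intro k hk
      rw [hF, Finset.mem_filter] at hk
      obtain ⟨hkE, hc1, hc2⟩ := hk
      have hkC := Finset.mem_of_mem_erase hkE
      have hkne : k ≠ j₀ := Finset.ne_of_mem_erase hkE
      have hd := hdisj k hkC j₀ hj₀C hkne hc2 hc1
      have hhk : (0:ℝ) < h k := by exact_mod_cast hh k hkC
      have hhj : (0:ℝ) < h j₀ := by exact_mod_cast hh j₀ hj₀C
      have htop : y k + h k ≤ y j₀ :=
        top_le_of_disjoint hhk hhj (hj₀max k hkC) hd
      have := hz1 k hkE
      linarith
    have hZle : (Z₀ : ℝ) ≤ y j₀ := by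
      have hy0' : 0 ≤ y j₀ := hy0 j₀ hj₀C
      have : Z₀ ≤ ⌊y j₀⌋₊ := by
        apply Finset.sup_le
        intro k hk
        rw [Nat.le_floor_iff hy0']
        have := hbelow k hk
        push_cast
        linarith
      calc (Z₀ : ℝ) ≤ (⌊y j₀⌋₊ : ℝ) := by exact_mod_cast this
        _ ≤ y j₀ := Nat.floor_le hy0'
    refine ⟨fun j => if j = j₀ then Z₀ else z j, ?_, ?_⟩
    · intro j hj
      by_cases hjj : j = j₀
      · subst hjj; simpa using hZle
      · simpa [hjj] using hz1 j (Finset.mem_erase.2 ⟨hjj, hj⟩)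
    · intro j hj k hk hjk h1 h2
      by_cases hjj : j = j₀
      · have hkne : ¬ (k = j₀) := fun e => hjk (hjj.trans e.symm)
        rw [hjj] at h1 h2
        have hkE : k ∈ C.erase j₀ := Finset.mem_erase.2 ⟨hkne, hk⟩
        have hkF : k ∈ F := by
          rw [hF, Finset.mem_filter]; exact ⟨hkE, h1, h2⟩
        have hle : z k + h k ≤ Z₀ := Finset.le_sup (f := fun k => z k + h k) hkF
        have hle' : (z k : ℝ) + h k ≤ (Z₀ : ℝ) := by exact_mod_cast hle
        rw [hjj]
        simp only [if_pos rfl, if_neg hkne]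
        exact (disjoint_Ioo_of_le hle').symm
      · by_cases hkk : k = j₀
        · rw [hkk] at h1 h2
          have hjE : j ∈ C.erase j₀ := Finset.mem_erase.2 ⟨hjj, hj⟩
          have hjF : j ∈ F := by
            rw [hF, Finset.mem_filter]; exact ⟨hjE, h2, h1⟩
          have hle : z j + h j ≤ Z₀ := Finset.le_sup (f := fun k => z k + h k) hjF
          have hle' : (z j : ℝ) + h j ≤ (Z₀ : ℝ) := by exact_mod_cast hle
          rw [hkk]
          simp only [if_pos rfl, if_neg hjj]
          exact disjoint_Ioo_of_le hle'
        · simp only [if_neg hjj, if_neg hkk]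
          exact hz2 j (Finset.mem_erase.2 ⟨hjj, hj⟩)
            k (Finset.mem_erase.2 ⟨hkk, hk⟩) hjk h1 h2

/-- **Validity of the `H_i`-aware combinatorial Benders' cut.**  Let `C ⊆ J`,
let `p j ∈ W_i(j)` be normal positions on strip `i`, and let `H̄` be a
nonnegative integer such that the y-check for `C` at positions `p` and height
`H̄` is infeasible.  Then every feasible GMSPP packing `(σ, x, y)` with
x-coordinates restricted to normal positions (encoded by 0-1 variables
`x_{i'jp} = 1 ↔ σ j = i' ∧ x j = p`) and strip heights `Hs` satisfies the cut
`(H̄+1)·∑_{j ∈ C} x_{i,j,p j} − Hs i ≤ (H̄+1)·(|C| − 1)`.  In particular, if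
all items in `C` occupy their positions `p j` on strip `i`, then
`Hs i ≥ H̄ + 1`. -/
theorem hi_aware_benders_cut_valid {ι κ : Type*}
    [DecidableEq ι] [DecidableEq κ]
    (J : Finset ι) (I : Finset κ) (w h : ι → ℕ) (Wd : κ → ℕ)
    (hw : ∀ j ∈ J, 1 ≤ w j) (hh : ∀ j ∈ J, 1 ≤ h j)
    (hW : ∀ i ∈ I, 1 ≤ Wd i)
    (C : Finset ι) (hC : C ⊆ J) (i : κ) (hi : i ∈ I)
    (p : ι → ℕ) (hp : ∀ j ∈ C, p j ∈ NormalPosNat J w (Wd i) j)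
    (Hbar : ℕ)
    (hinfeas : ¬ YCheckFeasible C (fun j => (w j : ℝ)) (fun j => (h j : ℝ))
      (fun j => (p j : ℝ)) (Hbar : ℝ))
    (σ : ι → κ) (x y : ι → ℝ) (Hs : κ → ℝ)
    (hpack : IsGMSPPPacking J I (fun j => (w j : ℝ)) (fun j => (h j : ℝ))
      (fun i' => (Wd i' : ℝ)) Hs σ x y)
    (hnp : ∀ j ∈ J, IsNormalPosition J w (Wd (σ j)) j (x j)) :
    ((Hbar : ℝ) + 1) *
        (∑ j ∈ C, if σ j = i ∧ x j = (p j : ℝ) then (1 : ℝ) else 0)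
      - Hs i ≤ ((Hbar : ℝ) + 1) * ((C.card : ℝ) - 1) ∧
    ((∀ j ∈ C, σ j = i ∧ x j = (p j : ℝ)) → (Hbar : ℝ) + 1 ≤ Hs i) := by
  obtain ⟨hHs0, hσI, hbnd, hdisj⟩ := hpack
  -- Key claim: if all items of `C` sit at positions `p` on strip `i`,
  -- then `Hs i ≥ Hbar + 1`.
  have key : (∀ j ∈ C, σ j = i ∧ x j = (p j : ℝ)) → (Hbar : ℝ) + 1 ≤ Hs i := by
    intro hall
    by_contra hlt
    push_neg at hlt
    -- the packing's y-coordinates give a feasible y-check at height `Hs i`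
    have hyb : ∀ j ∈ C, 0 ≤ y j ∧ y j + (h j : ℝ) ≤ Hs i := by
      intro j hj
      obtain ⟨_, hy0, _, hyH⟩ := hbnd j (hC hj)
      refine ⟨hy0, ?_⟩
      rw [← (hall j hj).1]
      exact hyH
    have hydisj : ∀ j ∈ C, ∀ k ∈ C, j ≠ k →
        (p j : ℝ) < (p k : ℝ) + (w k : ℝ) → (p k : ℝ) < (p j : ℝ) + (w j : ℝ) →
        Disjoint (Set.Ioo (y j) (y j + (h j : ℝ)))
                 (Set.Ioo (y k) (y k + (h k : ℝ))) := by
      intro j hj k hk hjk h1 h2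
      have hσ : σ j = σ k := (hall j hj).1.trans (hall k hk).1.symm
      have hd := hdisj j (hC hj) k (hC hk) hjk hσ
      rw [(hall j hj).2, (hall k hk).2] at hd
      have hwj : (0:ℝ) < (w j : ℝ) := by exact_mod_cast hw j (hC hj)
      have hwk : (0:ℝ) < (w k : ℝ) := by exact_mod_cast hw k (hC hk)
      refine prod_disjoint_snd hd ?_
      exact ⟨_, overlap_pt (by linarith) (by linarith) h1 h2⟩
    obtain ⟨z, hz1, hz2⟩ := integerize h (fun j => (p j : ℝ)) (fun j => (w j : ℝ))
      C (fun j hj => hh j (hC hj)) y (fun j hj => (hyb j hj).1) hydisj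
    -- the integerized packing is feasible at height `Hbar`: contradiction
    apply hinfeas
    refine ⟨fun j => (z j : ℝ), ?_, ?_⟩
    · intro j hj
      refine ⟨by positivity, ?_⟩
      have h1 : (z j : ℝ) + (h j : ℝ) ≤ y j + (h j : ℝ) := by
        have := hz1 j hj; linarith
      have h2 : (z j : ℝ) + (h j : ℝ) < (Hbar : ℝ) + 1 :=
        lt_of_le_of_lt (h1.trans (hyb j hj).2) hlt
      have h3 : z j + h j < Hbar + 1 := by exact_mod_cast h2
      have h4 : z j + h j ≤ Hbar := Nat.lt_succ_iff.1 h3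
      show ((z j : ℝ)) + ((h j : ℝ)) ≤ (Hbar : ℝ)
      exact_mod_cast h4
    · intro j hj k hk hjk h1 h2
      exact hz2 j hj k hk hjk h1 h2
  refine ⟨?_, key⟩
  by_cases hall : ∀ j ∈ C, σ j = i ∧ x j = (p j : ℝ)
  · have hsum : (∑ j ∈ C, if σ j = i ∧ x j = (p j : ℝ) then (1 : ℝ) else 0)
        = (C.card : ℝ) := by
      rw [Finset.sum_congr rfl (fun j hj => if_pos (hall j hj))]
      simp
    rw [hsum]
    have := key hall
    have hb : (0:ℝ) ≤ (Hbar : ℝ) := by positivity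
    nlinarith [this]
  · push_neg at hall
    obtain ⟨j₀, hj₀C, hj₀⟩ := hall
    have hcard : 1 ≤ C.card := Finset.card_pos.2 ⟨j₀, hj₀C⟩
    have hsumle : (∑ j ∈ C, if σ j = i ∧ x j = (p j : ℝ) then (1 : ℝ) else 0)
        ≤ (C.card : ℝ) - 1 := by
      rw [← Finset.add_sum_erase C _ hj₀C, if_neg (fun hc => hj₀ hc.1 hc.2), zero_add]
      calc (∑ j ∈ C.erase j₀, if σ j = i ∧ x j = (p j : ℝ) then (1 : ℝ) else 0)
          ≤ ∑ _j ∈ C.erase j₀, (1:ℝ) := by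
            apply Finset.sum_le_sum
            intro j _
            split_ifs <;> norm_num
        _ = ((C.erase j₀).card : ℝ) := by simp
        _ = (C.card : ℝ) - 1 := by
            rw [Finset.card_erase_of_mem hj₀C]
            push_cast [Nat.cast_sub hcard]
            ring
    have hb : (0:ℝ) ≤ (Hbar : ℝ) + 1 := by positivity
    have hHsi : 0 ≤ Hs i := hHs0 i hi
    nlinarith [mul_le_mul_of_nonneg_left hsumle hb]
end
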